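/- arXiv:2406.17372 — 10 statements merged into one kernel-verified Lean document; each statement's English description precedes it below -/
import Mathlib

section
/- Let G be a group and let g₁, ..., g_k ∈ G be elements that generate G. For each subset S ⊆ {1,...,k} let g_S = ∏_{i ∈ S} g_i, the product taken in increasing order of indices, and let A be the multiset { g_S : S ⊆ {1,...,k} } of size 2^k. Then for every proper subgroup H of G, the number of subsets S ⊆ {1,...,k} with g_S ∈ H is at most 2^(k-1); in other words, A has detection probability at least 1/2 in G. -/
/-!
Let `j` be the largest index with `g j ∉ H`; it exists because the `g i` generate `G` and `H` is
proper. For `j ∉ S` the ordered products factor as `g_S = P * Q` and `g_{S ∪ {j}} = P * g j * Q`,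
where `Q` only involves indices above `j` and so lies in `H`. Hence at most one of `S` and
`S ∪ {j}` has its product in `H`, and these pairs partition the `2 ^ k` subsets.
-/

open Finset

namespace Finset

section LinearOrder

variable {α : Type*} [LinearOrder α]

theorem sort_union_of_forall_lt {s t : Finset α} (h : ∀ x ∈ s, ∀ y ∈ t, x < y) :
    (s ∪ t).sort (· ≤ ·) = s.sort (· ≤ ·) ++ t.sort (· ≤ ·) := by
  have hsorted : (s.sort (· ≤ ·) ++ t.sort (· ≤ ·)).Pairwise (· ≤ ·) :=
    List.pairwise_append.2 ⟨pairwise_sort _ _, pairwise_sort _ _,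
      fun x hx y hy => (h x ((mem_sort _).1 hx) y ((mem_sort _).1 hy)).le⟩
  have hnodup : (s.sort (· ≤ ·) ++ t.sort (· ≤ ·)).Nodup :=
    List.nodup_append.2 ⟨sort_nodup _ _, sort_nodup _ _,
      fun x hx y hy => (h x ((mem_sort _).1 hx) y ((mem_sort _).1 hy)).ne⟩
  refine List.Perm.eq_of_pairwise' (pairwise_sort _ _) hsorted
    (List.perm_of_nodup_nodup_toFinset_eq (sort_nodup _ _) hnodup ?_)
  simp only [List.toFinset_append, sort_toFinset]

theorem filter_lt_union_filter_gt {s : Finset α} {a : α} (ha : a ∉ s) :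
    s.filter (· < a) ∪ s.filter (a < ·) = s := by
  rw [← filter_or, filter_true_of_mem]
  exact fun x hx => lt_or_gt_of_ne fun hxa => ha (hxa ▸ hx)

theorem sort_eq_sort_filter_lt_append {s : Finset α} {a : α} (ha : a ∉ s) :
    s.sort (· ≤ ·) = (s.filter (· < a)).sort (· ≤ ·) ++ (s.filter (a < ·)).sort (· ≤ ·) := by
  conv_lhs => rw [← filter_lt_union_filter_gt ha]
  exact sort_union_of_forall_lt fun x hx y hy => (mem_filter.1 hx).2.trans (mem_filter.1 hy).2

theorem sort_insert_eq_sort_filter_lt_append {s : Finset α} {a : α} (ha : a ∉ s) :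
    (insert a s).sort (· ≤ ·) =
      (s.filter (· < a)).sort (· ≤ ·) ++ a :: (s.filter (a < ·)).sort (· ≤ ·) := by
  rw [← sort_insert _ (fun b hb => (mem_filter.1 hb).2.le) (by simp), ← sort_union_of_forall_lt,
    union_insert, filter_lt_union_filter_gt ha]
  · intro x hx y hy
    rcases mem_insert.1 hy with rfl | hy
    · exact (mem_filter.1 hx).2
    · exact (mem_filter.1 hx).2.trans (mem_filter.1 hy).2

end LinearOrder

theorem card_filter_le_two_pow_pred {α : Type*} [Fintype α] [DecidableEq α]
    {p : Finset α → Prop} [DecidablePred p] (a : α)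
    (h : ∀ s, a ∉ s → p s → ¬ p (insert a s)) :
    #(univ.filter p) ≤ 2 ^ (Fintype.card α - 1) := by
  have insert_eq {s t : Finset α} (hs : a ∈ s) (ht : a ∉ t) (hst : s.erase a = t.erase a) :
      s = insert a t := by
    rw [← insert_erase hs, hst, erase_eq_of_notMem ht]
  calc #(univ.filter p) ≤ #(univ.erase a).powerset := by
        refine card_le_card_of_injOn (·.erase a) (fun s _ => ?_) fun s hs t ht hst => ?_
        · exact mem_powerset.2 (erase_subset_erase a (subset_univ s))
        simp only [coe_filter, mem_univ, true_and] at hs ht hst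
        by_cases has : a ∈ s <;> by_cases hat : a ∈ t
        · exact erase_injOn' a has hat hst
        · exact absurd (insert_eq has hat hst ▸ hs) (h t hat ht)
        · exact absurd (insert_eq hat has hst.symm ▸ ht) (h s has hs)
        · rwa [erase_eq_of_notMem has, erase_eq_of_notMem hat] at hst
    _ = 2 ^ (Fintype.card α - 1) := by
        rw [card_powerset, card_erase_of_mem (mem_univ a), card_univ]

end Finset

namespace Subgroup

variable {G : Type*} [Group G] {ι : Type*} [LinearOrder ι]

theorem mem_of_prod_sort_mem_of_prod_sort_insert_mem (H : Subgroup G) (g : ι → G)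
    {s : Finset ι} {a : ι} (ha : a ∉ s) (hgt : ∀ i ∈ s, a < i → g i ∈ H)
    (hs : ((s.sort (· ≤ ·)).map g).prod ∈ H)
    (hins : (((insert a s).sort (· ≤ ·)).map g).prod ∈ H) : g a ∈ H := by
  rw [sort_eq_sort_filter_lt_append ha, List.map_append, List.prod_append] at hs
  rw [sort_insert_eq_sort_filter_lt_append ha, List.map_append, List.prod_append, List.map_cons,
    List.prod_cons] at hins
  have hright : (((s.filter (a < ·)).sort (· ≤ ·)).map g).prod ∈ H := by
    refine H.list_prod_mem fun x hx => ?_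
    obtain ⟨i, hi, rfl⟩ := List.mem_map.1 hx
    obtain ⟨his, hai⟩ := mem_filter.1 ((mem_sort _).1 hi)
    exact hgt i his hai
  have hleft := (mul_mem_cancel_right hright).1 hs
  exact (mul_mem_cancel_right hright).1 ((mul_mem_cancel_left hleft).1 hins)

theorem exists_notMem_forall_gt_mem [Fintype ι] {g : ι → G} (hgen : closure (Set.range g) = ⊤)
    {H : Subgroup G} (hH : H ≠ ⊤) : ∃ j, g j ∉ H ∧ ∀ i, j < i → g i ∈ H := by
  classical
  have hne : (univ.filter fun i => g i ∉ H).Nonempty := by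
    rw [filter_nonempty_iff]
    by_contra! hall
    apply hH
    rw [eq_top_iff, ← hgen, closure_le]
    rintro _ ⟨i, rfl⟩
    exact hall i (mem_univ i)
  obtain ⟨j, hj, hmax⟩ := exists_max_image _ id hne
  exact ⟨j, (mem_filter.1 hj).2, fun i hji => by_contra fun hi =>
    (hmax i (mem_filter.2 ⟨mem_univ i, hi⟩)).not_gt hji⟩

end Subgroup

open scoped Classical

theorem stmt1_general {G : Type*} [Group G] (k : ℕ) (g : Fin k → G)
    (hgen : Subgroup.closure (Set.range g) = ⊤)
    (H : Subgroup G) (hH : H ≠ ⊤) :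
    (Finset.univ.filter fun S : Finset (Fin k) =>
        ((S.sort (· ≤ ·)).map g).prod ∈ H).card ≤ 2 ^ (k - 1) := by
  obtain ⟨j, hj, hgt⟩ := Subgroup.exists_notMem_forall_gt_mem hgen hH
  calc _ ≤ 2 ^ (Fintype.card (Fin k) - 1) :=
        card_filter_le_two_pow_pred j fun S hjS hS hins =>
          hj (H.mem_of_prod_sort_mem_of_prod_sort_insert_mem g hjS (fun i _ => hgt i) hS hins)
    _ = 2 ^ (k - 1) := by rw [Fintype.card_fin]

theorem stmt1 {G : Type*} [Group G] (k : ℕ) (hk : 0 < k) (g : Fin k → G)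
    (hgen : Subgroup.closure (Set.range g) = ⊤)
    (H : Subgroup G) (hH : H ≠ ⊤) :
    (Finset.univ.filter fun S : Finset (Fin k) =>
        ((S.sort (· ≤ ·)).map g).prod ∈ H).card ≤ 2 ^ (k - 1) :=
  stmt1_general k g hgen H hH
end

section
/- Let G be a finitely generated group, G' a group, and π : G → G' a surjective group homomorphism whose kernel is contained in the Frattini subgroup of G (the intersection of all maximal subgroups of G). Let A be a finite nonempty multiset of elements of G, let π(A) be its image multiset in G' (of the same size |A|), and let 0 ≤ δ ≤ 1 be a real number. Then A has detection probability at least δ in G if and only if π(A) has detection probability at least δ in G'. -/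
open scoped Classical

/-- `A` has detection probability at least `δ` in `G`. -/
def Detects {G : Type*} [Group G] (A : Multiset G) (δ : ℝ) : Prop :=
  ∀ H : Subgroup G, H ≠ ⊤ →
    ((A.filter (fun a => a ∈ H)).card : ℝ) ≤ (1 - δ) * (Multiset.card A : ℝ)

/-!
A proper subgroup `H'` of `G'` pulls back to the proper subgroup `π⁻¹(H')` of `G` containing the
same elements of `A`, which gives one direction for any surjection. Conversely, a proper subgroup
`H` of the finitely generated group `G` lies in a maximal subgroup `M`; since `ker π ≤ Φ(G) ≤ M`,
the image `π(M)` is proper and `π⁻¹(π(M)) = M`, so `π(A)` has at least as many elements in `π(M)`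
as `A` has in `H`.
-/

namespace Subgroup

variable {G : Type*} [Group G]

theorem isCompactElement_closure_finset (S : Finset G) :
    IsCompactElement (closure (S : Set G)) := by
  rw [CompleteLattice.isCompactElement_iff_le_of_directed_sSup_le]
  intro s hne hdir hle
  obtain ⟨K, hK, hSK⟩ := DirectedOn.exists_mem_subset_of_finset_subset_biUnion
    (f := ((↑) : Subgroup G → Set G)) hne hdir (s := S) fun x hx => by
      simpa using (mem_sSup_of_directedOn hne hdir).1 (hle (subset_closure hx))
  exact ⟨K, hK, (closure_le K).2 hSK⟩

instance isCoatomic_of_fg [Group.FG G] : IsCoatomic (Subgroup G) := by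
  obtain ⟨S, hS⟩ := Group.fg_def.mp ‹Group.FG G›
  exact CompleteLattice.coatomic_of_top_compact (hS ▸ isCompactElement_closure_finset S)

end Subgroup

section Detects

variable {G G' : Type*} [Group G] [Group G']

theorem card_filter_mem_map (π : G →* G') (A : Multiset G) (H' : Subgroup G') :
    Multiset.card ((A.map π).filter (· ∈ H')) = Multiset.card (A.filter (· ∈ H'.comap π)) := by
  rw [Multiset.filter_map, Multiset.card_map]
  rfl

theorem Detects.map {π : G →* G'} (hπ : Function.Surjective π) {A : Multiset G} {δ : ℝ}
    (hA : Detects A δ) : Detects (A.map π) δ := by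
  intro H' hH'
  have hcomap : H'.comap π ≠ ⊤ := fun h =>
    hH' (Subgroup.comap_injective hπ (by rw [h, Subgroup.comap_top]))
  rw [card_filter_mem_map, Multiset.card_map]
  exact hA _ hcomap

theorem Detects.of_map [IsCoatomic (Subgroup G)] {π : G →* G'} (hker : π.ker ≤ frattini G)
    {A : Multiset G} {δ : ℝ} (hA : Detects (A.map π) δ) : Detects A δ := by
  intro H hH
  obtain ⟨M, hM, hHM⟩ := (eq_top_or_exists_le_coatom H).resolve_left hH
  have hcomap : (M.map π).comap π = M :=
    Subgroup.comap_map_eq_self (hker.trans (frattini_le_coatom hM))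
  have hmap : M.map π ≠ ⊤ := fun h => hM.1 (by rw [← hcomap, h, Subgroup.comap_top])
  have hbound := hA _ hmap
  rw [card_filter_mem_map, Multiset.card_map, hcomap] at hbound
  refine le_trans ?_ hbound
  exact_mod_cast Multiset.card_le_card (Multiset.monotone_filter_right A fun _ ha => hHM ha)

end Detects

theorem stmt3_general {G G' : Type*} [Group G] [Group.FG G] [Group G']
    (π : G →* G') (hsurj : Function.Surjective π)
    (hker : π.ker ≤ frattini G)
    (A : Multiset G) (δ : ℝ) :
    Detects A δ ↔ Detects (A.map π) δ :=
  ⟨Detects.map hsurj, Detects.of_map hker⟩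

theorem stmt3 {G G' : Type*} [Group G] [Group.FG G] [Group G']
    (π : G →* G') (hsurj : Function.Surjective π)
    (hker : π.ker ≤ frattini G)
    (A : Multiset G) (hA : A ≠ 0) (δ : ℝ) (h0 : 0 ≤ δ) (h1 : δ ≤ 1) :
    Detects A δ ↔ Detects (A.map π) δ :=
  stmt3_general π hsurj hker A δ
end

section
/- Let k ≥ 2 be an integer and F_k the free group on generators x₁, ..., x_k. There exists a finite nonempty multiset A of elements of F_k, each of which is of the form x_S for some subset S ⊆ {1,...,k}, with |A| ≤ 432·k·⌈log₂ k⌉, such that for every nonempty subset C ⊆ {1,...,k}, the number of elements of A (counted with multiplicity) lying in Σ_C is at most (1 − 1/(12·log₂ k))·|A|. -/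
/-
For `n = 432 k ⌈log₂ k⌉` independent random subsets `S` of `{1, …, k}`, each drawn by choosing a
level `j ∈ {0, …, ⌈log₂ k⌉}` uniformly and then keeping every index with probability `2⁻ʲ`, the
multiset of the words `x_S` works. If `S ∩ C = {c}` then `x_S` lies in no subgroup `H` of syndrome
`C`: every other letter of `x_S` lies in `H`, and `x_c` does not. For a fixed nonempty `C` the
level `j = ⌈log₂ |C|⌉` gives `|S ∩ C| = 1` with probability at least `1/4`, so a random `S` meets
`C` exactly once with probability at least `1 / (4 (⌈log₂ k⌉ + 1))`. By an exponential moment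
(Chernoff) bound, fewer than `n / (12 log₂ k)` such samples occur with probability below `2⁻ᵏ`,
so a union bound over the fewer than `2ᵏ` sets `C` leaves a good choice of samples.
-/

open scoped Classical
open Finset Real

lemma Real.exp_le_four_mul {x : ℝ} (h₁ : 1 / 2 ≤ x) (h₂ : x ≤ 1) : exp x ≤ 4 * x := by
  have hhalf : exp (1 / 2) ≤ 2 := by
    have : exp (1 / 2) ^ 2 ≤ 2 ^ 2 := by
      rw [← exp_nat_mul]; norm_num; linarith [exp_one_lt_d9]
    exact (pow_le_pow_iff_left₀ (exp_nonneg _) (by norm_num) (by norm_num)).1 this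
  -- `1 - y ≤ exp (-y)` with `y = x - 1/2`, and `(2x - 1)(x - 1) ≤ 0`
  have hrest : exp (x - 1 / 2) ≤ 2 * x := by
    have h := add_one_le_exp (-(x - 1 / 2))
    have hy := exp_pos (x - 1 / 2)
    rw [exp_neg] at h
    have h' := mul_le_mul_of_nonneg_left h hy.le
    rw [mul_inv_cancel₀ hy.ne'] at h'
    nlinarith
  calc exp x = exp (1 / 2) * exp (x - 1 / 2) := by rw [← exp_add]; ring_nf
    _ ≤ 2 * (2 * x) := by gcongr
    _ = 4 * x := by ring

lemma pow_le_four_mul_mul_sub_one_pow {m : ℕ} {t : ℝ} (hm : 1 ≤ m) (hmt : m ≤ t)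
    (htm : t < 2 * m) : t ^ m ≤ 4 * m * (t - 1) ^ (m - 1) := by
  obtain rfl | hm₂ : m = 1 ∨ 2 ≤ m := by omega
  · norm_num at htm ⊢; linarith
  have ht : 1 < t := by
    have : (2 : ℝ) ≤ m := by exact_mod_cast hm₂
    linarith
  have hratio : (t / (t - 1)) ^ (m - 1) ≤ 4 * m / t := by
    calc (t / (t - 1)) ^ (m - 1) ≤ exp (1 / (t - 1)) ^ (m - 1) := by
          have := add_one_le_exp (1 / (t - 1))
          rw [div_add_one (by linarith), add_sub_cancel] at this
          gcongr
      _ = exp ((m - 1 : ℕ) / (t - 1)) := by rw [← exp_nat_mul]; ring_nf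
      _ ≤ exp (m / t) := by
          apply exp_le_exp.2
          rw [div_le_div_iff₀ (by linarith) (by linarith)]
          push_cast [hm]
          nlinarith
      _ ≤ 4 * (m / t) := exp_le_four_mul (by rw [le_div_iff₀ (by linarith)]; linarith)
          (by rw [div_le_one (by linarith)]; exact hmt)
      _ = 4 * m / t := by ring
  calc t ^ m = t * (t - 1) ^ (m - 1) * (t / (t - 1)) ^ (m - 1) := by
        rw [mul_assoc, ← mul_pow, mul_div_cancel₀ _ (by linarith), ← pow_succ']
        congr 1; omega
    _ ≤ t * (t - 1) ^ (m - 1) * (4 * m / t) := by gcongr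
    _ = 4 * m * (t - 1) ^ (m - 1) := by field_simp

theorem Nat.exists_le_two_pow_lt_two_mul {m : ℕ} (hm : 1 ≤ m) :
    ∃ j, m ≤ 2 ^ j ∧ 2 ^ j < 2 * m := by
  refine ⟨clog 2 m, le_pow_clog one_lt_two m, ?_⟩
  rcases hm.eq_or_lt with rfl | hm
  · simp
  have hpos := clog_pos one_lt_two hm
  calc 2 ^ clog 2 m = 2 * 2 ^ (clog 2 m - 1) := by rw [← pow_succ']; congr 1; omega
    _ < 2 * m := by
      have := pow_pred_clog_lt_self one_lt_two hm
      rw [Nat.pred_eq_sub_one] at this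
      omega

theorem card_filter_card_filter_mem_eq_one {ι α : Type*} [Fintype ι] [DecidableEq ι]
    [Fintype α] [DecidableEq α] (s : Finset ι) (A : Finset α) :
    #{v : ι → α | #{i ∈ s | v i ∈ A} = 1} =
      #s * (#A * (Fintype.card α - #A) ^ (#s - 1) * Fintype.card α ^ (Fintype.card ι - #s)) := by
  -- `piFinset (T c)` consists of the maps whose only coordinate in `s` landing in `A` is `c`
  set T : ι → ι → Finset α := fun c i => if i = c then A else if i ∈ s then Aᶜ else univ
  have hsplit : ({v : ι → α | #{i ∈ s | v i ∈ A} = 1} : Finset _) =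
      s.biUnion fun c => Fintype.piFinset (T c) := by
    ext v
    simp only [mem_filter, mem_univ, true_and, mem_biUnion, card_eq_one, Fintype.mem_piFinset]
    constructor
    · rintro ⟨c, hc⟩
      have hmem (i : ι) : i ∈ s ∧ v i ∈ A ↔ i = c := by
        simpa using congrArg (i ∈ ·) hc
      refine ⟨c, ((hmem c).2 rfl).1, fun i => ?_⟩
      simp only [T]
      split_ifs <;> grind [mem_compl]
    · rintro ⟨c, hc, hv⟩
      refine ⟨c, ext fun i => ?_⟩
      have := hv i
      simp only [T] at this
      split_ifs at this <;> grind [mem_compl]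
  have hdisj : (s : Set ι).PairwiseDisjoint fun c => Fintype.piFinset (T c) := by
    intro c₁ hc₁ c₂ _ hne
    refine disjoint_left.2 fun v h₁ h₂ => ?_
    have h₁ := Fintype.mem_piFinset.1 h₁ c₁
    have h₂ := Fintype.mem_piFinset.1 h₂ c₁
    simp only [T, if_pos rfl, if_neg hne, if_pos (mem_coe.1 hc₁), mem_compl] at h₁ h₂
    exact h₂ h₁
  have hcard : ∀ c ∈ s, #(Fintype.piFinset (T c)) =
      #A * (Fintype.card α - #A) ^ (#s - 1) * Fintype.card α ^ (Fintype.card ι - #s) := by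
    intro c hc
    have hin : ∀ i ∈ s.erase c, #(T c i) = #Aᶜ := fun i hi => by
      simp only [T, if_neg (ne_of_mem_erase hi), if_pos (mem_of_mem_erase hi)]
    have hout : ∀ i ∈ sᶜ, #(T c i) = #(univ : Finset α) := fun i hi => by
      have hi : i ∉ s := mem_compl.1 hi
      simp only [T, if_neg hi, if_neg (ne_of_mem_of_not_mem hc hi).symm]
    rw [Fintype.card_piFinset, ← prod_mul_prod_compl s, ← mul_prod_erase s _ hc,
      prod_congr rfl hin, prod_congr rfl hout, prod_const, prod_const, card_erase_of_mem hc,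
      card_compl, card_compl, card_univ]
    simp [T]
  rw [hsplit, card_biUnion hdisj, sum_congr rfl hcard, sum_const, smul_eq_mul]

/-- A uniformly random `ω` is a uniform level `j = ω.1 ≤ L` together with a random subset that
contains each index independently with probability `2⁻ʲ`. -/
def dyadicSample (L : ℕ) {ι : Type*} [Fintype ι] (ω : Fin (L + 1) × (ι → Fin (2 ^ L))) :
    Finset ι :=
  {i | (ω.2 i : ℕ) < 2 ^ (L - ω.1)}

theorem card_level_le_card_dyadicSample_inter_eq_one {ι : Type*} [Fintype ι] [DecidableEq ι]
    {L j : ℕ} (hj : j ≤ L) (C : Finset ι) :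
    #{v : ι → Fin (2 ^ L) |
        #{i ∈ C | v i ∈ ({u : Fin (2 ^ L) | (u : ℕ) < 2 ^ (L - j)} : Finset _)} = 1} ≤
      #{ω | #(dyadicSample L ω ∩ C) = 1} := by
  refine card_le_card_of_injOn (fun v => ((⟨j, by omega⟩ : Fin (L + 1)), v)) ?_
    (fun v _ w _ h => congrArg Prod.snd h)
  intro v hv
  have hinter : dyadicSample L (⟨j, by omega⟩, v) ∩ C =
      {i ∈ C | v i ∈ ({u : Fin (2 ^ L) | (u : ℕ) < 2 ^ (L - j)} : Finset _)} := by
    ext i; simp [dyadicSample, and_comm]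
  simpa [hinter] using hv

theorem two_pow_le_four_mul_card_dyadicSample_inter_eq_one {ι : Type*} [Fintype ι]
    [DecidableEq ι] {L : ℕ} {C : Finset ι} (hC : C.Nonempty) (hCL : #C ≤ 2 ^ L) :
    (2 : ℝ) ^ (L * Fintype.card ι) ≤ 4 * #{ω | #(dyadicSample L ω ∩ C) = 1} := by
  set m := #C
  set k := Fintype.card ι
  have hm : 1 ≤ m := card_pos.2 hC
  have hmk : m ≤ k := card_le_univ C
  obtain ⟨j, hmj, hjm⟩ := Nat.exists_le_two_pow_lt_two_mul hm
  have hjL : j ≤ L := by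
    have : 2 ^ j < 2 ^ (L + 1) := by rw [pow_succ']; omega
    exact Nat.lt_succ_iff.1 ((Nat.pow_lt_pow_iff_right (by norm_num)).1 this)
  have hlevel := card_level_le_card_dyadicSample_inter_eq_one hjL C
  rw [card_filter_card_filter_mem_eq_one, Fin.card_filter_val_lt, Fintype.card_fin,
    min_eq_right (Nat.pow_le_pow_right two_pos (Nat.sub_le L j))] at hlevel
  have hmt : (m : ℝ) ≤ 2 ^ j := by exact_mod_cast hmj
  have htm : (2 : ℝ) ^ j < 2 * m := by exact_mod_cast hjm
  set r : ℝ := 2 ^ (L - j)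
  set t : ℝ := 2 ^ j
  have hrt : (2 : ℝ) ^ L = r * t := by rw [← pow_add, Nat.sub_add_cancel hjL]
  replace hlevel := (Nat.cast_le (α := ℝ)).2 hlevel
  push_cast [Nat.cast_sub (Nat.pow_le_pow_right two_pos (Nat.sub_le L j))] at hlevel
  rw [hrt] at hlevel
  have hrm : r ^ m = r * r ^ (m - 1) := by rw [← pow_succ']; congr 1; omega
  calc (2 : ℝ) ^ (L * k) = r ^ m * t ^ m * (r * t) ^ (k - m) := by
        rw [← mul_pow, ← pow_add, Nat.add_sub_cancel' hmk, ← hrt, pow_mul]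
    _ ≤ r ^ m * (4 * m * (t - 1) ^ (m - 1)) * (r * t) ^ (k - m) := by
        gcongr; exact pow_le_four_mul_mul_sub_one_pow hm hmt htm
    _ = 4 * (m * (r * (r * t - r) ^ (m - 1) * (r * t) ^ (k - m))) := by
        rw [hrm, show r * t - r = r * (t - 1) by ring, mul_pow r (t - 1)]; ring
    _ ≤ 4 * #{ω | #(dyadicSample L ω ∩ C) = 1} := by gcongr

theorem card_tuples_few_hits_le {Ω ι : Type*} [Fintype Ω] [Fintype ι] [DecidableEq ι]
    (P : Ω → Prop) [DecidablePred P] (τ : ℝ) :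
    (#{f : ι → Ω | (#{i | P (f i)} : ℝ) ≤ τ} : ℝ) ≤
      2 ^ τ * (Fintype.card Ω - #{ω | P ω} / 2 : ℝ) ^ Fintype.card ι := by
  -- weight each hit by `1/2`: tuples with at most `τ` hits have weight at least `2 ^ (-τ)`
  set w : Ω → ℝ := fun ω => if P ω then 1 / 2 else 1
  have hsum : ∑ ω, w ω = Fintype.card Ω - #{ω | P ω} / 2 := by
    have := card_filter_add_card_filter_not (s := univ) P
    rw [card_univ] at this
    simp only [w, sum_ite, sum_const, nsmul_eq_mul, mul_one, ← this]
    push_cast; ring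
  have hprod (f : ι → Ω) : ∏ i, w (f i) = (1 / 2) ^ #{i | P (f i)} := by
    simp only [w, prod_ite, prod_const, one_pow, mul_one]
  have hbad : ∀ f ∈ ({f : ι → Ω | (#{i | P (f i)} : ℝ) ≤ τ} : Finset _),
      (2 : ℝ) ^ (-τ) ≤ ∏ i, w (f i) := by
    intro f hf
    rw [mem_filter] at hf
    rw [hprod, one_div, inv_pow, ← rpow_natCast, ← rpow_neg zero_le_two]
    exact rpow_le_rpow_of_exponent_le one_le_two (neg_le_neg hf.2)
  have hw : ∀ ω, 0 ≤ w ω := fun ω => by simp only [w]; split_ifs <;> norm_num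
  calc (#{f : ι → Ω | (#{i | P (f i)} : ℝ) ≤ τ} : ℝ)
      = 2 ^ τ * (#{f : ι → Ω | (#{i | P (f i)} : ℝ) ≤ τ} * 2 ^ (-τ)) := by
        rw [mul_left_comm, ← rpow_add two_pos, add_neg_cancel, rpow_zero, mul_one]
    _ ≤ 2 ^ τ * ∑ f : ι → Ω, ∏ i, w (f i) := by
        gcongr
        calc _ = ∑ f ∈ ({f : ι → Ω | (#{i | P (f i)} : ℝ) ≤ τ} : Finset _), (2 : ℝ) ^ (-τ) := by
              rw [sum_const, nsmul_eq_mul]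
          _ ≤ _ := sum_le_sum hbad
          _ ≤ _ := sum_le_sum_of_subset_of_nonneg (subset_univ _)
              fun f _ _ => prod_nonneg fun i _ => hw (f i)
    _ = 2 ^ τ * (Fintype.card Ω - #{ω | P ω} / 2 : ℝ) ^ Fintype.card ι := by
        rw [← Fintype.prod_sum (fun _ => w), prod_const, hsum, card_univ]

theorem exists_tuple_forall_lt_card_hits {Ω ι γ : Type*} [Fintype Ω] [Nonempty Ω] [Fintype ι]
    (𝒞 : Finset γ) (P : γ → Ω → Prop) [∀ c, DecidablePred (P c)] {δ τ : ℝ}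
    (hδ : ∀ c ∈ 𝒞, δ * Fintype.card Ω ≤ #{ω | P c ω})
    (h : #𝒞 * 2 ^ τ * (1 - δ / 2) ^ Fintype.card ι < 1) :
    ∃ f : ι → Ω, ∀ c ∈ 𝒞, τ < #{i | P c (f i)} := by
  by_contra! hcon
  set N : ℝ := (Fintype.card Ω : ℝ)
  set n := Fintype.card ι
  have hcover : (univ : Finset (ι → Ω)) ⊆
      𝒞.biUnion fun c => {f : ι → Ω | (#{i | P c (f i)} : ℝ) ≤ τ} := by
    intro f _
    obtain ⟨c, hc, hf⟩ := hcon f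
    exact mem_biUnion.2 ⟨c, hc, mem_filter.2 ⟨mem_univ f, hf⟩⟩
  have hbad : ∀ c ∈ 𝒞, (#{f : ι → Ω | (#{i | P c (f i)} : ℝ) ≤ τ} : ℝ) ≤
      2 ^ τ * ((1 - δ / 2) * N) ^ n := by
    intro c hc
    refine (card_tuples_few_hits_le (P c) τ).trans ?_
    have hle : (#{ω | P c ω} : ℝ) ≤ N := by simp only [N]; exact_mod_cast card_le_univ _
    gcongr
    · linarith
    · linarith [hδ c hc]
  have hN : 0 < N ^ n := pow_pos (by simp only [N]; exact_mod_cast Fintype.card_pos) n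
  refine lt_irrefl (N ^ n) ?_
  calc N ^ n = #(univ : Finset (ι → Ω)) := by simp [N, n]
    _ ≤ ∑ c ∈ 𝒞, (#{f : ι → Ω | (#{i | P c (f i)} : ℝ) ≤ τ} : ℝ) := by
        exact_mod_cast (card_le_card hcover).trans card_biUnion_le
    _ ≤ ∑ c ∈ 𝒞, 2 ^ τ * ((1 - δ / 2) * N) ^ n := sum_le_sum hbad
    _ = #𝒞 * 2 ^ τ * (1 - δ / 2) ^ n * N ^ n := by rw [sum_const, nsmul_eq_mul, mul_pow]; ring
    _ < N ^ n := mul_lt_of_lt_one_left hN h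

theorem log_two_mul_lt {L : ℕ} {x : ℝ} (hx : 1 ≤ x) (hxL : x ≤ L) (hLx : L < x + 1)
    (hL : L = 1 ∨ 3 / 2 ≤ x) : (x + 36 * L) * (L + 1) * log 2 < 54 * L * x := by
  have hlog := log_two_lt_d9
  have hlog₀ := log_pos one_lt_two
  rcases hL with rfl | hx₂
  · have : x = 1 := le_antisymm (by simpa using hxL) hx
    subst this; norm_num; linarith
  rcases Nat.lt_or_ge L 3 with hL₂ | hL₃
  · obtain rfl : L = 2 := by
      have : (1 : ℝ) < L := by linarith
      have : 1 < L := by exact_mod_cast this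
      omega
    norm_num
    nlinarith
  · have hL₃ : (3 : ℝ) ≤ L := by exact_mod_cast hL₃
    nlinarith [mul_pos (by linarith : (0 : ℝ) < 54 * L - 0.7 * (L + 1))
        (by linarith : (0 : ℝ) < x - (L - 1)),
      mul_lt_mul_of_pos_right (by linarith : log 2 < 0.7) (by nlinarith : (0 : ℝ) < (L + 1) * x)]

theorem two_pow_mul_rpow_mul_pow_lt_one {k L : ℕ} {x : ℝ} (hk : 0 < k) (hx : 1 ≤ x)
    (hxL : x ≤ L) (hLx : L < x + 1) (hL : L = 1 ∨ 3 / 2 ≤ x) :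
    (2 : ℝ) ^ k * 2 ^ ((432 * k * L : ℕ) / (12 * x)) * (1 - 1 / (4 * (L + 1)) / 2) ^ (432 * k * L)
      < 1 := by
  set n := 432 * k * L
  set τ : ℝ := n / (12 * x) with hτ
  have hn : (n : ℝ) = 432 * k * L := by simp [n]
  have hexp : (1 - 1 / (4 * (L + 1)) / 2 : ℝ) ^ n ≤ exp (-(n / (8 * (L + 1)))) := by
    calc (1 - 1 / (4 * (L + 1)) / 2 : ℝ) ^ n ≤ exp (-(1 / (4 * (L + 1)) / 2)) ^ n := by
          have h := add_one_le_exp (-(1 / (4 * (L + 1) : ℝ) / 2))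
          have : (1 / (4 * (L + 1)) / 2 : ℝ) ≤ 1 := by
            rw [div_le_one two_pos, div_le_iff₀ (by positivity)]; linarith
          gcongr
          linarith
      _ = exp (-(n / (8 * (L + 1)))) := by rw [← exp_nat_mul]; congr 1; field_simp; ring
  have htwo : (2 : ℝ) ^ k * 2 ^ τ = exp ((k + τ) * log 2) := by
    rw [← rpow_natCast, ← rpow_add two_pos, rpow_def_of_pos two_pos, mul_comm]
  have hkey : (k + τ) * log 2 < n / (8 * (L + 1)) := by
    have hpos : (0 : ℝ) < k / (x * (L + 1)) := by positivity
    calc (k + τ) * log 2 = k / (x * (L + 1)) * ((x + 36 * L) * (L + 1) * log 2) := by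
          rw [hτ, hn]; field_simp; ring
      _ < k / (x * (L + 1)) * (54 * L * x) :=
          mul_lt_mul_of_pos_left (log_two_mul_lt hx hxL hLx hL) hpos
      _ = n / (8 * (L + 1)) := by rw [hn]; field_simp; ring
  calc (2 : ℝ) ^ k * 2 ^ τ * (1 - 1 / (4 * (L + 1)) / 2) ^ n
      ≤ exp ((k + τ) * log 2) * exp (-(n / (8 * (L + 1)))) := by rw [htwo]; gcongr
    _ < 1 := by rw [← exp_add, exp_lt_one_iff]; linarith

theorem three_halves_le_logb_two {k : ℕ} (hk : 3 ≤ k) : 3 / 2 ≤ logb 2 k := by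
  have h : log (2 ^ 3) ≤ log ((k : ℝ) ^ 2) := log_le_log (by norm_num) (by
    have : (3 : ℝ) ≤ k := by exact_mod_cast hk
    nlinarith)
  rw [log_pow, log_pow] at h
  rw [logb, le_div_iff₀ (log_pos one_lt_two)]
  push_cast at h
  linarith

theorem exists_dyadicSamples_many_hits {k : ℕ} (hk : 2 ≤ k) :
    ∃ f : Fin (432 * k * ⌈logb 2 k⌉₊) →
        Fin (⌈logb 2 k⌉₊ + 1) × (Fin k → Fin (2 ^ ⌈logb 2 k⌉₊)),
      ∀ C : Finset (Fin k), C.Nonempty →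
        ((432 * k * ⌈logb 2 k⌉₊ : ℕ) : ℝ) / (12 * logb 2 k) <
          #{i | #(dyadicSample ⌈logb 2 k⌉₊ (f i) ∩ C) = 1} := by
  set x := logb 2 k
  set L := ⌈x⌉₊
  have hx : 1 ≤ x := by
    rw [le_logb_iff_rpow_le one_lt_two (by positivity), rpow_one]; exact_mod_cast hk
  have hkL : k ≤ 2 ^ L := by
    have hL : L = Nat.clog 2 k := by simpa using natCeil_logb_natCast 2 k
    exact hL ▸ Nat.le_pow_clog one_lt_two k
  have hL : L = 1 ∨ 3 / 2 ≤ x := by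
    rcases hk.eq_or_lt with rfl | hk₃
    · left; simp [L, x]
    · exact .inr (three_halves_le_logb_two hk₃)
  have hdensity : ∀ C ∈ ({C | C.Nonempty} : Finset (Finset (Fin k))),
      1 / (4 * (L + 1)) * Fintype.card (Fin (L + 1) × (Fin k → Fin (2 ^ L))) ≤
        (#{ω | #(dyadicSample L ω ∩ C) = 1} : ℝ) := by
    intro C hC
    have := two_pow_le_four_mul_card_dyadicSample_inter_eq_one (mem_filter.1 hC).2
      ((card_le_univ C).trans (by simpa using hkL))
    simp only [Fintype.card_prod, Fintype.card_fin, Fintype.card_fun, Nat.cast_mul, Nat.cast_pow,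
      Nat.cast_add, Nat.cast_one, Nat.cast_ofNat] at this ⊢
    rw [← pow_mul]
    field_simp
    linarith
  have hunion : (#({C | C.Nonempty} : Finset (Finset (Fin k))) : ℝ) *
      2 ^ (((432 * k * L : ℕ) : ℝ) / (12 * x)) * (1 - 1 / (4 * (L + 1)) / 2) ^ (432 * k * L)
        < 1 := by
    have hcard : (#({C | C.Nonempty} : Finset (Finset (Fin k))) : ℝ) ≤ 2 ^ k := by
      exact_mod_cast (card_filter_le _ _).trans (by simp)
    have hbase : (0 : ℝ) ≤ 1 - 1 / (4 * (L + 1)) / 2 := by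
      rw [sub_nonneg, div_le_one two_pos, div_le_iff₀ (by positivity)]; linarith
    calc _ ≤ (2 : ℝ) ^ k * 2 ^ (((432 * k * L : ℕ) : ℝ) / (12 * x)) *
          (1 - 1 / (4 * (L + 1)) / 2) ^ (432 * k * L) := by gcongr
      _ < 1 := two_pow_mul_rpow_mul_pow_lt_one (by omega) hx (Nat.le_ceil x)
          (Nat.ceil_lt_add_one (by linarith)) hL
  obtain ⟨f, hf⟩ := exists_tuple_forall_lt_card_hits (ι := Fin (432 * k * L)) _ _ hdensity
    (τ := ((432 * k * L : ℕ) : ℝ) / (12 * x)) (by simpa using hunion)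
  exact ⟨f, fun C hC => hf C (mem_filter.2 ⟨mem_univ C, hC⟩)⟩

theorem Subgroup.list_prod_mem_iff_of_nodup {G : Type*} [Group G] (H : Subgroup G) {l : List G}
    {a : G} (hl : l.Nodup) (ha : a ∈ l) (hH : ∀ b ∈ l, b ≠ a → b ∈ H) :
    l.prod ∈ H ↔ a ∈ H := by
  obtain ⟨l₁, l₂, rfl⟩ := List.append_of_mem ha
  have ha' : a ∉ l₁ ++ l₂ := (List.nodup_cons.1 (List.nodup_middle.1 hl)).1
  have h₁ : l₁.prod ∈ H := H.list_prod_mem fun b hb =>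
    hH b (by simp [hb]) (by rintro rfl; exact ha' (List.mem_append_left _ hb))
  have h₂ : l₂.prod ∈ H := H.list_prod_mem fun b hb =>
    hH b (by simp [hb]) (by rintro rfl; exact ha' (List.mem_append_right _ hb))
  rw [List.prod_append, List.prod_cons, H.mul_mem_cancel_left h₁, H.mul_mem_cancel_right h₂]

theorem FreeGroup.prod_map_of_sort_notMem {α : Type*} [LinearOrder α] {S C : Finset α} {c : α}
    (hSC : S ∩ C = {c}) {H : Subgroup (FreeGroup α)} (hH : ∀ i, of i ∉ H ↔ i ∈ C) :
    ((S.sort (· ≤ ·)).map of).prod ∉ H := by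
  have hc : c ∈ S ∩ C := hSC ▸ Finset.mem_singleton_self c
  rw [Finset.mem_inter] at hc
  have hS : ∀ i ∈ S, i ≠ c → of i ∈ H := fun i hi hic =>
    not_not.1 fun h => hic (Finset.mem_singleton.1 (hSC ▸ Finset.mem_inter.2 ⟨hi, (hH i).1 h⟩))
  rw [Subgroup.list_prod_mem_iff_of_nodup H ((S.sort_nodup _).map of_injective)
    (List.mem_map_of_mem (by simpa using hc.1))]
  · exact (hH c).2 hc.2
  · simp only [List.mem_map, Finset.mem_sort]
    rintro _ ⟨i, hi, rfl⟩ hic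
    exact hS i hi fun h => hic (h ▸ rfl)

theorem FreeGroup.card_filter_syndrome_add_card_inter_eq_one_le {α ι : Type*}
    [LinearOrder α] [Fintype ι] (S : ι → Finset α) (C : Finset α) :
    Multiset.card ((univ.val.map fun i => (((S i).sort (· ≤ ·)).map of).prod).filter
        fun w => ∃ H : Subgroup (FreeGroup α), (∀ a, of a ∉ H ↔ a ∈ C) ∧ w ∈ H) +
      #{i | #(S i ∩ C) = 1} ≤ Fintype.card ι := by
  have hsub : ({i | ∃ H : Subgroup (FreeGroup α), (∀ a, of a ∉ H ↔ a ∈ C) ∧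
      (((S i).sort (· ≤ ·)).map of).prod ∈ H} : Finset ι) ⊆
      ({i | ¬ #(S i ∩ C) = 1} : Finset ι) := by
    intro i
    simp only [mem_filter, mem_univ, true_and]
    rintro ⟨H, hH, hmem⟩ hcard
    obtain ⟨c, hc⟩ := card_eq_one.1 hcard
    exact prod_map_of_sort_notMem hc hH hmem
  rw [Multiset.filter_map, Multiset.card_map, ← filter_val, card_val, ← card_univ,
    ← card_filter_add_card_filter_not (s := univ) fun i => #(S i ∩ C) = 1, add_comm (#_)]
  exact Nat.add_le_add_left (card_le_card hsub) _

theorem stmt5 (k : ℕ) (hk : 2 ≤ k) :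
    ∃ A : Multiset (FreeGroup (Fin k)), A ≠ 0 ∧
      (∀ w ∈ A, ∃ S : Finset (Fin k),
        w = ((S.sort (· ≤ ·)).map FreeGroup.of).prod) ∧
      Multiset.card A ≤ 432 * k * ⌈Real.logb 2 k⌉₊ ∧
      ∀ C : Finset (Fin k), C.Nonempty →
        ((A.filter (fun w => ∃ H : Subgroup (FreeGroup (Fin k)),
            (∀ i : Fin k, FreeGroup.of i ∉ H ↔ i ∈ C) ∧ w ∈ H)).card : ℝ)
          ≤ (1 - 1 / (12 * Real.logb 2 k)) * (Multiset.card A : ℝ) := by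
  obtain ⟨f, hf⟩ := exists_dyadicSamples_many_hits hk
  have hx : 0 < logb 2 k := logb_pos one_lt_two (by exact_mod_cast hk)
  have hn : 0 < 432 * k * ⌈logb 2 k⌉₊ := Nat.mul_pos (by omega) (Nat.ceil_pos.2 hx)
  refine ⟨univ.val.map fun i => (((dyadicSample _ (f i)).sort (· ≤ ·)).map FreeGroup.of).prod,
    by simp [hn.ne'], fun w hw => ?_, by simp, fun C hC => ?_⟩
  · obtain ⟨i, -, rfl⟩ := Multiset.mem_map.1 hw
    exact ⟨_, rfl⟩
  have hcount := (Nat.cast_le (α := ℝ)).2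
    (FreeGroup.card_filter_syndrome_add_card_inter_eq_one_le (fun i => dyadicSample _ (f i)) C)
  have hhits := hf C hC
  rw [Multiset.card_map, card_val, card_univ, Fintype.card_fin]
  simp only [Fintype.card_fin, Nat.cast_add] at hcount
  calc _ ≤ ((432 * k * ⌈logb 2 k⌉₊ : ℕ) : ℝ) - (432 * k * ⌈logb 2 k⌉₊ : ℕ) / (12 * logb 2 k) := by
        linarith
    _ = _ := by field_simp
end

section
/- Let k be a positive integer, 0 < δ ≤ 1 a real number, and d = ⌈1/δ⌉. Let A be a finite multiset of elements of the free group F_k on generators x₁, ..., x_k with |A| ≥ d, such that for every nonempty subset C ⊆ {1,...,k}, the number of elements of A (counted with multiplicity) lying in Σ_C is at most (1 − δ)·|A|. Then there exists a finite nonempty multiset A' of elements of F_k with |A'| = 61·k·2^d such that A' has detection probability at least 1/8 in F_k. -/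
open scoped Classical

/-!
Choose `61k` tuples of `d` elements of `A` and let `A'` consist of all `2^d` ordered
subproducts of each tuple. A proper subgroup `H` of `F_k` misses a generator, so `H ⊆ Σ_C` for
its nonempty syndrome `C`. If some entry of a tuple lies outside `H`, at most half of the
subproducts of that tuple lie in `H`. A uniformly random tuple lies entirely in `Σ_C` with
probability at most `(1 - δ)^d ≤ e⁻¹`, and since `2^k · 2^(61k) · e^(-45k) < 1`, a union bound
over the syndromes gives tuples with fewer than `45k` of them inside `Σ_C` for every `C`. Then
at most `(61k + 45k) / 2 · 2^d ≤ 7/8 · |A'|` elements of `A'` lie in `H`.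
-/

open Finset

namespace List

variable {G : Type*} [Group G]

def subproducts (l : List G) : Multiset G := (l.sublists'.map List.prod : Multiset G)

theorem card_subproducts (l : List G) : Multiset.card l.subproducts = 2 ^ l.length := by
  simp [subproducts, length_sublists']

theorem subproducts_cons (a : G) (l : List G) :
    (a :: l).subproducts = l.subproducts + l.subproducts.map (a * ·) := by
  simp [subproducts, sublists'_cons, Function.comp_def]

theorem mem_of_mem_subproducts {H : Subgroup G} {l : List G} (hl : ∀ x ∈ l, x ∈ H) {g : G}
    (hg : g ∈ l.subproducts) : g ∈ H := by
  obtain ⟨s, hs, rfl⟩ := List.mem_map.1 (Multiset.mem_coe.1 hg)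
  exact H.list_prod_mem fun x hx => hl x ((mem_sublists'.1 hs).subset hx)

-- The left factor `g` is what makes the statement strong enough for induction on `l`.
theorem two_mul_card_filter_mul_mem_subproducts_le (H : Subgroup G) {l : List G}
    (hl : ∃ x ∈ l, x ∉ H) (g : G) :
    2 * Multiset.card (l.subproducts.filter (g * · ∈ H)) ≤ 2 ^ l.length := by
  induction l generalizing g with
  | nil => simp at hl
  | cons a l ih =>
    rw [subproducts_cons, Multiset.filter_add, Multiset.card_add, Multiset.filter_map,
      Multiset.card_map, length_cons, pow_succ]
    simp only [Function.comp_def, ← mul_assoc]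
    by_cases hl' : ∃ x ∈ l, x ∉ H
    · linarith [ih hl' g, ih hl' (g * a)]
    push Not at hl'
    have ha : a ∉ H := by
      obtain ⟨x, hx, hxH⟩ := hl
      rcases mem_cons.1 hx with rfl | hx
      exacts [hxH, absurd (hl' x hx) hxH]
    -- every subproduct of `l` lies in `H`, so `g' * x ∈ H` only depends on `g'`
    have hempty (g' : G) (hg' : g' ∉ H) : l.subproducts.filter (g' * · ∈ H) = 0 :=
      Multiset.filter_eq_nil.2 fun x hx hgx =>
        hg' (by simpa using H.mul_mem hgx (H.inv_mem (mem_of_mem_subproducts hl' hx)))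
    have hle (g' : G) : Multiset.card (l.subproducts.filter (g' * · ∈ H)) ≤ 2 ^ l.length :=
      (Multiset.card_le_card (Multiset.filter_le _ _)).trans (card_subproducts l).le
    by_cases hg : g ∈ H
    · rw [hempty (g * a) fun h => ha (by simpa using H.mul_mem (H.inv_mem hg) h),
        Multiset.card_zero]
      linarith [hle g]
    · rw [hempty g hg, Multiset.card_zero]
      linarith [hle (g * a)]

theorem two_mul_card_filter_mem_subproducts_le (H : Subgroup G) {l : List G}
    (hl : ∃ x ∈ l, x ∉ H) :
    2 * Multiset.card (l.subproducts.filter (· ∈ H)) ≤ 2 ^ l.length := by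
  simpa using two_mul_card_filter_mul_mem_subproducts_le H hl 1

end List

theorem two_mul_card_filter_mem_sum_subproducts_le {G ι : Type*} [Group G] [Fintype ι]
    (w : ι → List G) {d : ℕ} (hw : ∀ i, (w i).length = d) (H : Subgroup G) :
    2 * Multiset.card ((∑ i, (w i).subproducts).filter (· ∈ H))
      ≤ (Fintype.card ι + #{i | ∀ x ∈ w i, x ∈ H}) * 2 ^ d := by
  rw [← Multiset.countP_eq_card_filter, ← Multiset.coe_countPAddMonoidHom, map_sum,
    Finset.mul_sum, card_filter, Fintype.card_eq_sum_ones, ← sum_add_distrib, sum_mul]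
  refine sum_le_sum fun i _ => ?_
  rw [Multiset.coe_countPAddMonoidHom, Multiset.countP_eq_card_filter, ← hw i]
  split_ifs with hi
  · have := Multiset.card_le_card (Multiset.filter_le (· ∈ H) (w i).subproducts)
    rw [List.card_subproducts] at this
    omega
  · push Not at hi
    simpa using List.two_mul_card_filter_mem_subproducts_le H hi

theorem card_filter_le_choose_mul_pow_mul_pow {σ : Type*} [Fintype σ] (n r : ℕ) (B : Finset σ) :
    #{F : Fin n → σ | r ≤ #{b | F b ∈ B}} ≤ n.choose r * #B ^ r * Fintype.card σ ^ (n - r) := by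
  -- an `F` with at least `r` coordinates in `B` is in `B` on some `r`-set `s` of coordinates
  have hsub : ({F : Fin n → σ | r ≤ #{b | F b ∈ B}} : Finset _) ⊆ (powersetCard r univ).biUnion
      fun s => Fintype.piFinset fun b => if b ∈ s then B else univ := by
    intro F hF
    obtain ⟨s, hs, hcard⟩ := exists_subset_card_eq (mem_filter.1 hF).2
    refine mem_biUnion.2 ⟨s, mem_powersetCard.2 ⟨subset_univ s, hcard⟩, ?_⟩
    refine Fintype.mem_piFinset.2 fun b => ?_
    split_ifs with hb
    exacts [(mem_filter.1 (hs hb)).2, mem_univ _]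
  have hpi (s : Finset (Fin n)) (hs : #s = r) :
      #(Fintype.piFinset fun b => if b ∈ s then B else univ)
        = #B ^ r * Fintype.card σ ^ (n - r) := by
    simp only [Fintype.card_piFinset, apply_ite card, card_univ]
    rw [prod_ite, prod_const, prod_const, filter_mem_eq_inter, univ_inter, ← compl_filter,
      filter_mem_eq_inter, univ_inter, card_compl, Fintype.card_fin, hs]
  calc _ ≤ _ := card_le_card hsub
    _ ≤ _ := card_biUnion_le
    _ = _ := by
      rw [sum_congr rfl fun s hs => hpi s (mem_powersetCard.1 hs).2, sum_const,
        card_powersetCard, card_univ, Fintype.card_fin, smul_eq_mul, mul_assoc]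

theorem exists_forall_card_filter_apply_mem_lt {σ κ : Type*} [Fintype σ] [Nonempty σ] {n r : ℕ}
    (hrn : r ≤ n) (𝒞 : Finset κ) (B : κ → Finset σ) {q : ℝ}
    (hB : ∀ c ∈ 𝒞, (#(B c) : ℝ) ≤ q * Fintype.card σ) (hsmall : #𝒞 * 2 ^ n * q ^ r < 1) :
    ∃ F : Fin n → σ, ∀ c ∈ 𝒞, #{b | F b ∈ B c} < r := by
  by_contra! h
  set N : ℝ := (Fintype.card σ : ℝ)
  have hN : 0 < N := Nat.cast_pos.2 Fintype.card_pos
  set E : κ → Finset (Fin n → σ) := fun c => {F | r ≤ #{b | F b ∈ B c}}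
  have hcover : (univ : Finset (Fin n → σ)) ⊆ 𝒞.biUnion E :=
    fun F _ => mem_biUnion.2 ((h F).imp fun c hc => ⟨hc.1, mem_filter.2 ⟨mem_univ F, hc.2⟩⟩)
  have hE (c) (hc : c ∈ 𝒞) : (#(E c) : ℝ) ≤ 2 ^ n * q ^ r * N ^ n := by
    calc _ ≤ (n.choose r * #(B c) ^ r * Fintype.card σ ^ (n - r) : ℝ) := by
          exact_mod_cast card_filter_le_choose_mul_pow_mul_pow n r (B c)
      _ ≤ 2 ^ n * (q * N) ^ r * N ^ (n - r) := by
          gcongr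
          · exact_mod_cast Nat.choose_le_two_pow n r
          · exact hB c hc
      _ = 2 ^ n * q ^ r * N ^ n := by
          rw [mul_pow, mul_assoc, mul_assoc, ← pow_add, Nat.add_sub_cancel' hrn, mul_assoc]
  have : N ^ n < N ^ n := calc
    N ^ n = #(univ : Finset (Fin n → σ)) := by simp [N]
    _ ≤ #(𝒞.biUnion E) := by exact_mod_cast card_le_card hcover
    _ ≤ ∑ c ∈ 𝒞, (#(E c) : ℝ) := by exact_mod_cast card_biUnion_le
    _ ≤ ∑ c ∈ 𝒞, 2 ^ n * q ^ r * N ^ n := sum_le_sum hE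
    _ = (#𝒞 * 2 ^ n * q ^ r) * N ^ n := by rw [sum_const, nsmul_eq_mul]; ring
    _ < N ^ n := by nlinarith [pow_pos hN n]
  exact this.false

theorem pow_le_exp_neg_one_mul_pow {x t δ : ℝ} {d : ℕ} (hx : 0 ≤ x) (hxt : x ≤ (1 - δ) * t)
    (ht : 0 ≤ t) (hd : 1 ≤ δ * d) : x ^ d ≤ Real.exp (-1) * t ^ d :=
  calc x ^ d ≤ (Real.exp (-δ) * t) ^ d :=
        pow_le_pow_left₀ hx (hxt.trans (by gcongr; exact Real.one_sub_le_exp_neg δ)) d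
    _ = Real.exp (-(δ * d)) * t ^ d := by rw [mul_pow, ← Real.exp_nat_mul]; ring_nf
    _ ≤ Real.exp (-1) * t ^ d := by gcongr

theorem two_pow_mul_exp_neg_one_pow_lt_one {k : ℕ} (hk : 0 < k) :
    (2 : ℝ) ^ k * 2 ^ (61 * k) * Real.exp (-1) ^ (45 * k) < 1 := by
  have h : (2 : ℝ) ^ 62 < Real.exp 1 ^ 45 :=
    calc (2 : ℝ) ^ 62 < 2.7 ^ 45 := by norm_num
      _ ≤ Real.exp 1 ^ 45 := by gcongr; linarith [Real.exp_one_gt_d9]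
  calc (2 : ℝ) ^ k * 2 ^ (61 * k) * Real.exp (-1) ^ (45 * k)
      = (2 ^ 62 * Real.exp (-1) ^ 45) ^ k := by
        rw [mul_pow, ← pow_mul, ← pow_mul, ← pow_add]
        ring_nf
    _ < 1 := by
      refine pow_lt_one₀ (by positivity) ?_ hk.ne'
      rw [Real.exp_neg, inv_pow, ← div_eq_mul_inv, div_lt_one (by positivity)]
      exact h

theorem Multiset.card_filter_univ_coe {α : Type*} (A : Multiset α) (p : α → Prop) :
    #{x : A | p x} = Multiset.card (A.filter p) := by
  conv_rhs => rw [← Multiset.map_univ_coe A]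
  rw [Multiset.filter_map, Multiset.card_map]
  rfl

theorem exists_tuples_card_filter_forall_mem_lt {α κ : Type*} {k d : ℕ} (hk : 0 < k)
    (𝒞 : Finset κ) (h𝒞 : #𝒞 ≤ 2 ^ k) (S : κ → Set α) {δ : ℝ} (hd : 1 ≤ δ * d)
    (A : Multiset α) (hA : A ≠ 0)
    (hS : ∀ c ∈ 𝒞, (Multiset.card (A.filter (· ∈ S c)) : ℝ) ≤ (1 - δ) * Multiset.card A) :
    ∃ F : Fin (61 * k) → Fin d → A, ∀ c ∈ 𝒞, #{b | ∀ j, (F b j : α) ∈ S c} < 45 * k := by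
  have : Nonempty A := Fintype.card_pos_iff.1 (by rwa [Multiset.card_coe, Multiset.card_pos])
  have hB (c) (hc : c ∈ 𝒞) : (#(Fintype.piFinset fun _ : Fin d => {x : A | (x : α) ∈ S c}) : ℝ)
      ≤ Real.exp (-1) * Fintype.card (Fin d → A) := by
    rw [Fintype.card_piFinset, prod_const, card_univ, Fintype.card_fin, Fintype.card_fun,
      Fintype.card_fin, Multiset.card_filter_univ_coe, Multiset.card_coe]
    push_cast
    exact pow_le_exp_neg_one_mul_pow (Nat.cast_nonneg _) (hS c hc) (Nat.cast_nonneg _) hd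
  have hsmall : #𝒞 * 2 ^ (61 * k) * Real.exp (-1) ^ (45 * k) < 1 :=
    lt_of_le_of_lt (by gcongr; exact_mod_cast h𝒞) (two_pow_mul_exp_neg_one_pow_lt_one hk)
  obtain ⟨F, hF⟩ := exists_forall_card_filter_apply_mem_lt (by omega) 𝒞 _ hB hsmall
  exact ⟨F, fun c hc => by simpa [Fintype.mem_piFinset] using hF c hc⟩

theorem exists_detects_of_subgroup_cover {G κ : Type*} [Group G] {k d : ℕ} (hk : 0 < k)
    (𝒞 : Finset κ) (h𝒞 : #𝒞 ≤ 2 ^ k) (S : κ → Set G)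
    (hcover : ∀ H : Subgroup G, H ≠ ⊤ → ∃ c ∈ 𝒞, (H : Set G) ⊆ S c) {δ : ℝ} (hd : 1 ≤ δ * d)
    (A : Multiset G) (hA : A ≠ 0)
    (hS : ∀ c ∈ 𝒞, (Multiset.card (A.filter (· ∈ S c)) : ℝ) ≤ (1 - δ) * Multiset.card A) :
    ∃ A' : Multiset G, A' ≠ 0 ∧ Multiset.card A' = 61 * k * 2 ^ d ∧ Detects A' (1 / 8) := by
  obtain ⟨F, hF⟩ := exists_tuples_card_filter_forall_mem_lt hk 𝒞 h𝒞 S hd A hA hS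
  set w : Fin (61 * k) → List G := fun b => List.ofFn fun j => (F b j : G)
  have hw (b) : (w b).length = d := List.length_ofFn
  have hcard : Multiset.card (∑ b, (w b).subproducts) = 61 * k * 2 ^ d := by
    simp [Multiset.card_sum, List.card_subproducts, hw]
  refine ⟨∑ b, (w b).subproducts, ?_, hcard, fun H hH => ?_⟩
  · rw [← Multiset.card_pos, hcard]
    positivity
  obtain ⟨c, hc, hHS⟩ := hcover H hH
  have hinside : #{b | ∀ x ∈ w b, x ∈ H} < 45 * k :=
    (card_le_card fun b hb => by
      simp only [mem_filter, mem_univ, true_and, w, List.forall_mem_ofFn_iff] at hb ⊢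
      exact fun j => hHS (hb j)).trans_lt (hF c hc)
  have := two_mul_card_filter_mem_sum_subproducts_le w hw H
  rw [Fintype.card_fin] at this
  have h8 : 8 * Multiset.card ((∑ b, (w b).subproducts).filter (· ∈ H)) ≤ 7 * (61 * k * 2 ^ d) := by
    nlinarith [pow_pos (two_pos : 0 < 2) d]
  rw [hcard]
  have h8' := (Nat.cast_le (α := ℝ)).2 h8
  push_cast at h8' ⊢
  linarith

theorem FreeGroup.exists_of_notMem_of_ne_top {α : Type*} {H : Subgroup (FreeGroup α)}
    (hH : H ≠ ⊤) : ∃ i, FreeGroup.of i ∉ H := by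
  by_contra! h
  refine hH (eq_top_iff.2 ?_)
  rw [← FreeGroup.closure_range_of, Subgroup.closure_le]
  rintro _ ⟨i, rfl⟩
  exact h i

theorem stmt6_general (k : ℕ) (hk : 0 < k) (δ : ℝ) (hδ0 : 0 < δ)
    (d : ℕ) (hd : d = ⌈1 / δ⌉₊)
    (A : Multiset (FreeGroup (Fin k))) (hA : d ≤ Multiset.card A)
    (hsynd : ∀ C : Finset (Fin k), C.Nonempty →
      ((A.filter (fun w => ∃ H : Subgroup (FreeGroup (Fin k)),
          (∀ i : Fin k, FreeGroup.of i ∉ H ↔ i ∈ C) ∧ w ∈ H)).card : ℝ)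
        ≤ (1 - δ) * (Multiset.card A : ℝ)) :
    ∃ A' : Multiset (FreeGroup (Fin k)), A' ≠ 0 ∧
      Multiset.card A' = 61 * k * 2 ^ d ∧ Detects A' (1 / 8) := by
  have hδd : 1 ≤ δ * d := by
    rw [hd, ← div_le_iff₀' hδ0]
    exact Nat.le_ceil _
  have hA0 : A ≠ 0 :=
    Multiset.card_pos.1 ((hd ▸ Nat.ceil_pos.2 (one_div_pos.2 hδ0)).trans_le hA)
  refine exists_detects_of_subgroup_cover hk {C | C.Nonempty}
    ((card_filter_le _ _).trans (by simp))
    (fun C => {w | ∃ H : Subgroup (FreeGroup (Fin k)), (∀ i, FreeGroup.of i ∉ H ↔ i ∈ C) ∧ w ∈ H})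
    (fun H hH => ?_) hδd A hA0 fun C hC => hsynd C (mem_filter.1 hC).2
  obtain ⟨i, hi⟩ := FreeGroup.exists_of_notMem_of_ne_top hH
  exact ⟨({i | FreeGroup.of i ∉ H} : Finset (Fin k)),
    mem_filter.2 ⟨mem_univ _, ⟨i, by simpa using hi⟩⟩, fun w hw => ⟨H, fun i => by simp, hw⟩⟩

theorem stmt6 (k : ℕ) (hk : 0 < k) (δ : ℝ) (hδ0 : 0 < δ) (hδ1 : δ ≤ 1)
    (d : ℕ) (hd : d = ⌈1 / δ⌉₊)
    (A : Multiset (FreeGroup (Fin k))) (hA : d ≤ Multiset.card A)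
    (hsynd : ∀ C : Finset (Fin k), C.Nonempty →
      ((A.filter (fun w => ∃ H : Subgroup (FreeGroup (Fin k)),
          (∀ i : Fin k, FreeGroup.of i ∉ H ↔ i ∈ C) ∧ w ∈ H)).card : ℝ)
        ≤ (1 - δ) * (Multiset.card A : ℝ)) :
    ∃ A' : Multiset (FreeGroup (Fin k)), A' ≠ 0 ∧
      Multiset.card A' = 61 * k * 2 ^ d ∧ Detects A' (1 / 8) :=
  stmt6_general k hk δ hδ0 d hd A hA hsynd
end

section
/- For every real number β with 0 < β ≤ 1 and every real number ε with 0 < ε < 1/2, there exist positive integers d and n₀ and a real number α > 0 such that: for every integer n ≥ n₀ for which β·n is an integer, there exists a left d-regular bipartite graph with left vertex set L of size n and right vertex set R of size β·n — formally, a function assigning to each left vertex an ordered d-tuple of right vertices (parallel edges allowed) — such that every subset S ⊆ L with |S| ≤ α·n has at least (1 − ε)·d·|S| distinct neighbors in R (the neighbors of S being all right vertices occurring in the tuple of some vertex of S). -/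
/-!
A uniformly random `f : Fin n → Fin d → Fin m` works. If a set `S` of `s ≤ α n` left vertices
has at most `t = ⌊(1 - ε) d s⌋` neighbours, they lie in some `t`-set `T`; there are
`C(n, s) C(m, t)` pairs `(S, T)`, and a fraction `(t / m) ^ (d s)` of all maps sends `S` into `T`.
With `C(n, k) k ^ k ≤ (e n) ^ k`, `t ≤ d s ≤ m` and the slack `d s - t ≥ 2 s` coming from
`ε d ≥ 2`, the term for `s` is at most `2 ^ (-s)` of all maps once `e ^ (d + 1) d² s n ≤ m² / 2`,
which dictates `α = β² / (2 e ^ (d + 1) d²)`. Summing over `s ≥ 1`, fewer than all maps are bad.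
-/

open Finset Fintype Real

lemma choose_mul_pow_self_le (n k : ℕ) : (n.choose k : ℝ) * k ^ k ≤ (exp 1 * n) ^ k := by
  have hk : (k : ℝ) ^ k ≤ exp 1 ^ k * k.factorial := by
    have := pow_div_factorial_le_exp (k : ℝ) (Nat.cast_nonneg k) k
    rwa [div_le_iff₀ (by positivity), ← exp_one_pow] at this
  calc (n.choose k : ℝ) * k ^ k ≤ (n ^ k / k.factorial) * (exp 1 ^ k * k.factorial) := by
        gcongr
        exact Nat.choose_le_pow_div k n
    _ = (exp 1 * n) ^ k := by field_simp; ring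

lemma choose_mul_choose_mul_pow_le {n m d s t : ℕ} (hs : 0 < s) (ht : t + 2 * s ≤ d * s)
    (hm : d * s ≤ m) (h : exp 1 ^ (d + 1) * d ^ 2 * s * n ≤ m ^ 2 / 2) :
    (n.choose s : ℝ) * m.choose t * t ^ (d * s) ≤ (1 / 2) ^ s * m ^ (d * s) := by
  obtain ⟨r, hr⟩ := Nat.exists_eq_add_of_le ht
  have htm : (t : ℝ) ≤ m := by exact_mod_cast (by omega : t ≤ m)
  have htds : (t : ℝ) ≤ d * s := by exact_mod_cast (by omega : t ≤ d * s)
  have hrm : (r : ℝ) ≤ m := by exact_mod_cast (by omega : r ≤ m)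
  rw [← mul_le_mul_iff_of_pos_right (pow_pos (Nat.cast_pos.2 hs : (0 : ℝ) < s) s)]
  calc (n.choose s : ℝ) * m.choose t * t ^ (d * s) * s ^ s
      = (n.choose s * s ^ s) * (m.choose t * t ^ t) * t ^ (2 * s) * t ^ r := by rw [hr]; ring
    _ ≤ (exp 1 * n) ^ s * (exp 1 * m) ^ t * (d * s) ^ (2 * s) * m ^ r := by
        gcongr
        · exact choose_mul_pow_self_le n s
        · exact choose_mul_pow_self_le m t
    _ ≤ (exp 1 * n) ^ s * (exp 1 ^ (d * s) * m ^ t) * (d * s) ^ (2 * s) * m ^ r := by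
        rw [mul_pow (exp 1) (m : ℝ)]
        gcongr
        · exact one_le_exp zero_le_one
        · omega
    _ = (exp 1 ^ (d + 1) * d ^ 2 * s * n) ^ s * s ^ s * m ^ (t + r) := by ring
    _ ≤ (m ^ 2 / 2) ^ s * s ^ s * m ^ (t + r) := by gcongr
    _ = (1 / 2) ^ s * m ^ (d * s) * s ^ s := by rw [hr]; ring

lemma sum_Icc_one_half_pow (n : ℕ) : ∑ s ∈ Icc 1 n, (1 / 2 : ℝ) ^ s = 1 - (1 / 2) ^ n := by
  induction n with
  | zero => simp
  | succ k ih => rw [sum_Icc_succ_top (by omega), ih]; ring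

section Counting

variable {V ι W : Type*} [Fintype ι] [DecidableEq W]

def neighborFinset (f : V → ι → W) (S : Finset V) : Finset W :=
  S.biUnion fun v => univ.image (f v)

lemma neighborFinset_subset_iff {f : V → ι → W} {S : Finset V} {T : Finset W} :
    neighborFinset f S ⊆ T ↔ ∀ v ∈ S, ∀ i, f v i ∈ T := by
  simp [neighborFinset, image_subset_iff]

variable [Fintype V] [DecidableEq V] [DecidableEq ι] [Fintype W]

lemma card_filter_forall_mem (S : Finset V) (T : Finset W) :
    #{f : V → ι → W | ∀ v ∈ S, ∀ i, f v i ∈ T} =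
      (#T ^ card ι) ^ #S * (card W ^ card ι) ^ (card V - #S) := by
  have hpi : ({f : V → ι → W | ∀ v ∈ S, ∀ i, f v i ∈ T} : Finset _) =
      piFinset fun v => if v ∈ S then piFinset fun _ => T else univ := by
    ext f
    simp only [mem_filter, mem_univ, true_and, mem_piFinset]
    refine forall_congr' fun v => ?_
    split_ifs with hv <;> simp [hv]
  rw [hpi, card_piFinset]
  simp [apply_ite card, prod_ite, filter_not, ← compl_eq_univ_sdiff, card_compl]

lemma card_filter_exists_card_neighborFinset_le (I : Finset ℕ) (t : ℕ → ℕ)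
    (ht : ∀ s ∈ I, t s ≤ card W) :
    #{f : V → ι → W | ∃ S : Finset V, #S ∈ I ∧ #(neighborFinset f S) ≤ t #S} ≤
      ∑ s ∈ I, (card V).choose s *
        ((card W).choose (t s) * ((t s ^ card ι) ^ s * (card W ^ card ι) ^ (card V - s))) := by
  calc _ ≤ #(I.biUnion fun s => (powersetCard s univ).biUnion fun S =>
          (powersetCard (t s) univ).biUnion fun T =>
            ({f : V → ι → W | ∀ v ∈ S, ∀ i, f v i ∈ T} : Finset _)) := by
        refine card_le_card fun f hf => ?_
        obtain ⟨S, hSI, hS⟩ := (mem_filter.1 hf).2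
        obtain ⟨T, hST, -, hT⟩ := exists_subsuperset_card_eq (subset_univ _) hS
          (by simpa using ht _ hSI)
        simp only [mem_biUnion, mem_powersetCard, mem_filter]
        exact ⟨#S, hSI, S, ⟨subset_univ _, rfl⟩, T, ⟨subset_univ _, hT⟩, mem_univ _,
          neighborFinset_subset_iff.1 hST⟩
    _ ≤ _ := card_biUnion_le
    _ ≤ _ := by
        refine sum_le_sum fun s _ => ?_
        refine (card_biUnion_le_card_mul _ _ _ fun S hS => ?_).trans_eq
          (by rw [card_powersetCard, card_univ])
        refine (card_biUnion_le_card_mul _ _ _ fun T hT => ?_).trans_eq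
          (by rw [card_powersetCard, card_univ])
        rw [card_filter_forall_mem, (mem_powersetCard.1 hS).2, (mem_powersetCard.1 hT).2]

end Counting

lemma sum_choose_mul_choose_mul_pow_lt {n m d : ℕ} {I : Finset ℕ} {t : ℕ → ℕ} (hm : 0 < m)
    (hIn : I ⊆ Icc 1 n) (hI : ∀ s ∈ I, t s + 2 * s ≤ d * s ∧ d * s ≤ m ∧
      exp 1 ^ (d + 1) * d ^ 2 * s * n ≤ m ^ 2 / 2) :
    ∑ s ∈ I, n.choose s * (m.choose (t s) * ((t s ^ d) ^ s * (m ^ d) ^ (n - s))) < (m ^ d) ^ n := by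
  have hterm : ∀ s ∈ I, (n.choose s * (m.choose (t s) * ((t s ^ d) ^ s * (m ^ d) ^ (n - s))) : ℝ)
      ≤ (1 / 2) ^ s * (m ^ d) ^ n := by
    intro s hs
    obtain ⟨hts, hdsm, hexp⟩ := hI s hs
    obtain ⟨hs1, hsn⟩ := mem_Icc.1 (hIn hs)
    calc (n.choose s * (m.choose (t s) * ((t s ^ d) ^ s * (m ^ d) ^ (n - s))) : ℝ)
        = n.choose s * m.choose (t s) * t s ^ (d * s) * m ^ (d * (n - s)) := by ring
      _ ≤ (1 / 2) ^ s * m ^ (d * s) * m ^ (d * (n - s)) := by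
        gcongr ?_ * _
        exact choose_mul_choose_mul_pow_le hs1 hts hdsm hexp
      _ = (1 / 2) ^ s * (m ^ d) ^ n := by
        rw [mul_assoc, ← pow_add, ← mul_add, Nat.add_sub_cancel' hsn, pow_mul]
  refine Nat.cast_lt (α := ℝ) |>.1 ?_
  push_cast
  calc _ ≤ ∑ s ∈ I, (1 / 2 : ℝ) ^ s * (m ^ d) ^ n := sum_le_sum hterm
    _ ≤ (1 - (1 / 2) ^ n) * (m ^ d) ^ n := by
      rw [← sum_mul, ← sum_Icc_one_half_pow]
      gcongr
    _ < (m ^ d) ^ n := by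
      have : (0 : ℝ) < (m ^ d) ^ n := by positivity
      nlinarith [pow_pos (one_half_pos : (0 : ℝ) < 1 / 2) n]

lemma exists_forall_card_le_card_neighborFinset {n m d : ℕ} {α ε : ℝ} (hε : ε ≤ 1)
    (hεd : 2 ≤ ε * d) (hm : 0 < m) (hdα : d * α * n ≤ m)
    (hα : exp 1 ^ (d + 1) * d ^ 2 * α * n ^ 2 ≤ m ^ 2 / 2) :
    ∃ f : Fin n → Fin d → Fin m, ∀ S : Finset (Fin n), (#S : ℝ) ≤ α * n →
      (1 - ε) * d * #S ≤ #(neighborFinset f S) := by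
  set t : ℕ → ℕ := fun s => ⌊(1 - ε) * d * s⌋₊
  set I : Finset ℕ := {s ∈ Icc 1 n | (s : ℝ) ≤ α * n}
  have hI : ∀ s ∈ I, t s + 2 * s ≤ d * s ∧ d * s ≤ m ∧
      exp 1 ^ (d + 1) * d ^ 2 * s * n ≤ m ^ 2 / 2 := by
    intro s hs
    obtain ⟨-, hsα⟩ := mem_filter.1 hs
    refine ⟨?_, ?_, ?_⟩
    · have : (t s : ℝ) ≤ (1 - ε) * d * s := Nat.floor_le (by have := sub_nonneg.2 hε; positivity)
      have : (t s + 2 * s : ℝ) ≤ d * s := by nlinarith [(Nat.cast_nonneg s : (0 : ℝ) ≤ s)]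
      exact_mod_cast this
    · have : (d * s : ℝ) ≤ m := by nlinarith [(Nat.cast_nonneg d : (0 : ℝ) ≤ d)]
      exact_mod_cast this
    · calc (exp 1 ^ (d + 1) * d ^ 2 * s * n : ℝ)
          ≤ exp 1 ^ (d + 1) * d ^ 2 * (α * n) * n := by gcongr
        _ ≤ m ^ 2 / 2 := by linarith
  have hbad : #{f : Fin n → Fin d → Fin m | ∃ S : Finset (Fin n), #S ∈ I ∧
      #(neighborFinset f S) ≤ t #S} < #(univ : Finset (Fin n → Fin d → Fin m)) := by
    have hcount := card_filter_exists_card_neighborFinset_le (V := Fin n) (ι := Fin d) (W := Fin m)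
      I t fun s hs => by simpa using (Nat.le_add_right _ _).trans ((hI s hs).1.trans (hI s hs).2.1)
    simp only [card_univ, Fintype.card_fun, Fintype.card_fin] at hcount ⊢
    exact hcount.trans_lt (sum_choose_mul_choose_mul_pow_lt hm (filter_subset _ _) hI)
  obtain ⟨f, -, hf⟩ := exists_mem_notMem_of_card_lt_card hbad
  refine ⟨f, fun S hS => ?_⟩
  by_contra! hlt
  obtain rfl | hS0 := S.eq_empty_or_nonempty
  · simp [neighborFinset] at hlt
  refine hf (mem_filter.2 ⟨mem_univ _, S, ?_, Nat.le_floor hlt.le⟩)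
  exact mem_filter.2 ⟨mem_Icc.2 ⟨card_pos.2 hS0, card_le_univ S |>.trans (by simp)⟩, hS⟩

theorem stmt9 (β ε : ℝ) (hβ0 : 0 < β) (hβ1 : β ≤ 1) (hε0 : 0 < ε) (hε : ε < 1 / 2) :
    ∃ (d n₀ : ℕ) (α : ℝ), 0 < d ∧ 0 < n₀ ∧ 0 < α ∧
      ∀ n : ℕ, n₀ ≤ n → ∀ m : ℕ, (m : ℝ) = β * n →
        ∃ f : Fin n → Fin d → Fin m,
          ∀ S : Finset (Fin n), (S.card : ℝ) ≤ α * n →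
            (1 - ε) * d * S.card ≤
              ((S.biUnion (fun v => Finset.image (f v) Finset.univ)).card : ℝ) := by
  set d := ⌈2 / ε⌉₊
  have hεd : 2 ≤ ε * d := by
    have := Nat.le_ceil (2 / ε)
    rwa [div_le_iff₀' hε0] at this
  have hd : 0 < d := by exact_mod_cast (by nlinarith : (0 : ℝ) < d)
  set α := β ^ 2 / (2 * exp 1 ^ (d + 1) * d ^ 2) with hα_def
  have hα : exp 1 ^ (d + 1) * d ^ 2 * α = β ^ 2 / 2 := by rw [hα_def]; field_simp
  have hdα : d * α ≤ β := by
    have hβd : β ≤ 2 * exp 1 ^ (d + 1) * d := by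
      have : (1 : ℝ) ≤ d := by exact_mod_cast hd
      nlinarith [one_le_pow₀ (n := d + 1) (one_le_exp zero_le_one)]
    calc d * α = β * (β / (2 * exp 1 ^ (d + 1) * d)) := by rw [hα_def]; field_simp
      _ ≤ β * 1 := by gcongr; exact div_le_one_of_le₀ hβd (by positivity)
      _ = β := mul_one β
  refine ⟨d, 1, α, hd, one_pos, by positivity, fun n hn₀ m hm => ?_⟩
  have hn : (0 : ℝ) < n := by exact_mod_cast hn₀
  refine exists_forall_card_le_card_neighborFinset (by linarith) hεd
    (by exact_mod_cast (hm ▸ by positivity : (0 : ℝ) < m)) ?_ ?_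
  · rw [hm]; gcongr
  · rw [hm]; linear_combination (n : ℝ) ^ 2 * hα
end

section
/- There exist real constants C ≥ 1 and δ > 0 such that for every positive integer k there exist an integer n with k ≤ n ≤ C·k and an n × k matrix E with integer entries such that for every prime number p the following holds: letting E_p denote the reduction of E modulo p, the (ℤ/pℤ)-linear map v ↦ E_p·v from (ℤ/pℤ)^k to (ℤ/pℤ)^n is injective, and every nonzero vector in its image has at least δ·n nonzero coordinates. -/
/-!
Stack two integer matrices with `k` columns. The first has the `2k` rows `(a ^ j)_{j < k}`,
`a < 2k`: modulo a prime `p > 2k` it evaluates a nonzero polynomial of degree `< k` at `2k`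
distinct points, so at most `k - 1` coordinates vanish. The second consists of `2k` blocks of
`4` rows with entries in `ℤ/(2k)!ℤ`; modulo every prime `p ≤ 2k`, a uniformly random such
matrix reduces to a uniformly random matrix over `𝔽_p`. For fixed `p`, `v ≠ 0` and `k + 1`
blocks, all their `4(k + 1)` rows are orthogonal to `v` with probability `p ^ (-4(k + 1))`.
A union bound over `≤ p ^ k` vectors, `≤ 2 ^ (2k)` sets of blocks and `≤ 2k + 1` primes leaves a
matrix in which at most `k` blocks are orthogonal to any `v ≠ 0`. Either way the Hamming weight
is `≥ k = n / 10` for `n = 10k`.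
-/

open Finset Matrix Polynomial Function

theorem Fintype.card_matrix {ι κ A : Type*} [Fintype ι] [DecidableEq ι] [Fintype κ]
    [DecidableEq κ] [Fintype A] :
    Fintype.card (Matrix ι κ A) = Fintype.card A ^ (Fintype.card ι * Fintype.card κ) := by
  rw [pow_mul', ← Fintype.card_fun, ← Fintype.card_fun]
  rfl

theorem AddMonoidHom.card_filter_eq_zero_mul_card {G H : Type*} [AddGroup G] [AddGroup H]
    [Fintype G] [Fintype H] [DecidableEq H] (f : G →+ H) (hf : Surjective f) :
    #{x | f x = 0} * Fintype.card H = Fintype.card G := by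
  have h := f.ker.card_mul_index
  rw [AddSubgroup.index_ker, f.range_eq_top_of_surjective hf, AddSubgroup.card_top] at h
  simpa [Nat.card_eq_fintype_card, Fintype.card_subtype, AddMonoidHom.mem_ker] using h

theorem surjective_dotProduct_comp {A K κ : Type*} [Semiring A] [DivisionRing K] [Fintype κ]
    [DecidableEq κ] {φ : A →+* K} (hφ : Surjective φ) {v : κ → K} (hv : v ≠ 0) :
    Surjective fun a : κ → A => (φ ∘ a) ⬝ᵥ v := by
  obtain ⟨j, hj⟩ : ∃ j, v j ≠ 0 := Function.ne_iff.mp hv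
  intro c
  obtain ⟨a, ha⟩ := hφ (c / v j)
  refine ⟨Pi.single j a, ?_⟩
  simpa [dotProduct, Pi.single_apply, apply_ite φ, ha] using div_mul_cancel₀ c hj

def zeroBlocks {β γ K : Type*} [Fintype β] [Fintype γ] [Zero K] [DecidableEq K]
    (u : β × γ → K) : Finset β :=
  {b | ∀ c, u (b, c) = 0}

theorem card_le_card_zeroBlocks_add_hammingNorm {β γ K : Type*} [Fintype β] [Fintype γ] [Zero K]
    [DecidableEq K] (u : β × γ → K) : Fintype.card β ≤ #(zeroBlocks u) + hammingNorm u := by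
  classical
  have h : #{b | ¬∀ c, u (b, c) = 0} ≤ hammingNorm u := by
    refine (card_le_card fun b hb => ?_).trans
      (card_image_le (s := {r | u r ≠ 0}) (f := Prod.fst))
    obtain ⟨c, hc⟩ := not_forall.mp (mem_filter.mp hb).2
    exact mem_image.mpr ⟨(b, c), by simpa using hc, rfl⟩
  have := card_filter_add_card_filter_not (s := (univ : Finset β)) (fun b => ∀ c, u (b, c) = 0)
  rw [card_univ] at this
  rw [zeroBlocks]
  omega

section RandomRows

variable {ι κ A K : Type*} [Fintype κ] [DecidableEq κ] [Ring A] [Fintype A]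
  [DivisionRing K] [Fintype K] [DecidableEq K] {φ : A →+* K}

theorem card_filter_forall_map_mulVec_eq_zero_mul [Fintype ι] [DecidableEq ι]
    (hφ : Surjective φ) {v : κ → K} (hv : v ≠ 0) (T : Finset ι) :
    #{R : Matrix ι κ A | ∀ i ∈ T, (R.map φ *ᵥ v) i = 0} * Fintype.card K ^ #T =
      Fintype.card A ^ (Fintype.card ι * Fintype.card κ) := by
  let Φ : Matrix ι κ A →+ (T → K) :=
    AddMonoidHom.mk' (fun R i => (R.map φ *ᵥ v) i) fun R S => by
      ext i; simp [Matrix.map_add, add_mulVec]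
  have hΦ : Surjective Φ := by
    intro w
    choose a ha using fun i : T => surjective_dotProduct_comp hφ hv (w i)
    exact ⟨fun i => if h : i ∈ T then a ⟨i, h⟩ else 0,
      funext fun i => by simpa [Φ, mulVec, Function.comp_def] using ha i⟩
  rw [← Fintype.card_matrix, ← Φ.card_filter_eq_zero_mul_card hΦ, Fintype.card_fun,
    Fintype.card_coe]
  congr 2
  ext R
  simp [Φ, funext_iff]

/-- Union bound over the nonzero `v` and the sets of `s` blocks. -/
theorem card_filter_exists_le_card_zeroBlocks_mul_le {β γ : Type*} [Fintype β] [DecidableEq β]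
    [Fintype γ] [DecidableEq γ] [DecidableEq A] (hφ : Surjective φ) (s : ℕ) :
    #{R : Matrix (β × γ) κ A | ∃ v ≠ 0, s ≤ #(zeroBlocks (R.map φ *ᵥ v))} *
        Fintype.card K ^ (s * Fintype.card γ) ≤
      Fintype.card K ^ Fintype.card κ * 2 ^ Fintype.card β *
        Fintype.card A ^ (Fintype.card β * Fintype.card γ * Fintype.card κ) := by
  set Ev : (κ → K) → Finset β → Finset (Matrix (β × γ) κ A) := fun v S =>
    {R | ∀ r ∈ S ×ˢ univ, (R.map φ *ᵥ v) r = 0}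
  set V : Finset (κ → K) := {v | v ≠ 0}
  have hsub : ({R | ∃ v ≠ 0, s ≤ #(zeroBlocks (R.map φ *ᵥ v))} :
      Finset (Matrix (β × γ) κ A)) ⊆ V.biUnion fun v => (powersetCard s univ).biUnion (Ev v) := by
    intro R hR
    obtain ⟨v, hv, hs⟩ := (mem_filter.mp hR).2
    obtain ⟨S, hS, rfl⟩ := exists_subset_card_eq hs
    simp only [mem_biUnion, mem_filter, mem_univ, true_and, mem_powersetCard, subset_univ, Ev, V]
    refine ⟨v, hv, S, rfl, fun r hr => ?_⟩
    exact (mem_filter.mp (hS (mem_product.mp hr).1)).2 r.2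
  have hEv : ∀ v ∈ V, ∀ S ∈ powersetCard s univ,
      #(Ev v S) * Fintype.card K ^ (s * Fintype.card γ) =
        Fintype.card A ^ (Fintype.card β * Fintype.card γ * Fintype.card κ) := by
    intro v hv S hS
    have hT : #(S ×ˢ (univ : Finset γ)) = s * Fintype.card γ := by
      rw [card_product, (mem_powersetCard.mp hS).2, card_univ]
    rw [← hT, card_filter_forall_map_mulVec_eq_zero_mul hφ (mem_filter.mp hv).2,
      Fintype.card_prod]
  calc _ ≤ (∑ v ∈ V, ∑ S ∈ powersetCard s univ, #(Ev v S)) *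
        Fintype.card K ^ (s * Fintype.card γ) := by
        gcongr
        exact (card_le_card hsub).trans <|
          card_biUnion_le.trans <| sum_le_sum fun _ _ => card_biUnion_le
    _ = ∑ v ∈ V, ∑ S ∈ powersetCard s univ,
          Fintype.card A ^ (Fintype.card β * Fintype.card γ * Fintype.card κ) := by
        simp only [sum_mul]
        exact sum_congr rfl fun v hv => sum_congr rfl fun S hS => hEv v hv S hS
    _ ≤ _ := by
        simp only [sum_const, smul_eq_mul, card_powersetCard, card_univ, ← mul_assoc]
        gcongr
        · exact (card_filter_le _ _).trans (by simp)
        · exact Nat.choose_le_two_pow _ _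

end RandomRows

theorem hammingNorm_sumElim {ι ι' K : Type*} [Fintype ι] [Fintype ι'] [Zero K] [DecidableEq K]
    (u : ι → K) (u' : ι' → K) :
    hammingNorm (Sum.elim u u') = hammingNorm u + hammingNorm u' := by
  simp only [hammingNorm, card_filter, Fintype.sum_sum_type, Sum.elim_inl, Sum.elim_inr]
  rfl

def HasMinWeightMod {ι κ : Type*} [Fintype ι] [Fintype κ] (p w : ℕ) (E : Matrix ι κ ℤ) : Prop :=
  ∀ v : κ → ZMod p, v ≠ 0 → w ≤ hammingNorm (E.map (Int.cast : ℤ → ZMod p) *ᵥ v)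

namespace HasMinWeightMod

variable {ι ι' κ : Type*} [Fintype ι] [Fintype ι'] [Fintype κ] {p w : ℕ} {E : Matrix ι κ ℤ}

theorem mono {w' : ℕ} (h : HasMinWeightMod p w E) (hw : w' ≤ w) : HasMinWeightMod p w' E :=
  fun v hv => hw.trans (h v hv)

theorem fromRows_left (h : HasMinWeightMod p w E) (E' : Matrix ι' κ ℤ) :
    HasMinWeightMod p w (fromRows E E') := fun v hv => by
  rw [fromRows_map, fromRows_mulVec, hammingNorm_sumElim]
  exact (h v hv).trans (Nat.le_add_right _ _)

theorem fromRows_right (h : HasMinWeightMod p w E) (E' : Matrix ι' κ ℤ) :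
    HasMinWeightMod p w (fromRows E' E) := fun v hv => by
  rw [fromRows_map, fromRows_mulVec, hammingNorm_sumElim]
  exact (h v hv).trans (Nat.le_add_left _ _)

theorem submatrix (h : HasMinWeightMod p w E) (e : ι' ≃ ι) :
    HasMinWeightMod p w (E.submatrix e id) := fun v hv => by
  have hN : hammingNorm ((E.submatrix e id).map (Int.cast : ℤ → ZMod p) *ᵥ v) =
      hammingNorm (E.map (Int.cast : ℤ → ZMod p) *ᵥ v) :=
    card_equiv e fun i => by simp only [mem_filter, mem_univ, true_and]; rfl
  exact hN ▸ h v hv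

theorem injective (h : HasMinWeightMod p w E) (hw : 0 < w) :
    Injective (E.map (Int.cast : ℤ → ZMod p) *ᵥ ·) := by
  intro v v' hvv'
  by_contra hne
  have h0 := h (v - v') (sub_ne_zero.mpr hne)
  rw [mulVec_sub, sub_eq_zero.mpr hvv', hammingNorm_zero] at h0
  omega

end HasMinWeightMod

theorem card_filter_sum_pow_mul_eq_zero_lt {K ι : Type*} [Field K] [Fintype ι] [DecidableEq K]
    {x : ι → K} (hx : Injective x) {k : ℕ} {v : Fin k → K} (hv : v ≠ 0) :
    #{i | ∑ j : Fin k, x i ^ (j : ℕ) * v j = 0} < k := by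
  set P : K[X] := ∑ j : Fin k, C (v j) * X ^ (j : ℕ)
  have hP : P ≠ 0 := by
    obtain ⟨j, hj⟩ : ∃ j, v j ≠ 0 := Function.ne_iff.mp hv
    refine ne_of_apply_ne (coeff · j) ?_
    simpa [P, finsetSum_coeff, coeff_C_mul_X_pow, Fin.val_inj] using hj
  by_contra! hk
  refine hP (eq_zero_of_natDegree_lt_card_of_eval_eq_zero' P
    (image x {i | ∑ j : Fin k, x i ^ (j : ℕ) * v j = 0}) ?_ ?_)
  · simp only [mem_image, mem_filter, mem_univ, true_and, forall_exists_index, and_imp]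
    rintro _ i hi rfl
    simp only [P, eval_finsetSum, eval_mul, eval_C, eval_pow, eval_X, ← hi]
    exact sum_congr rfl fun j _ => mul_comm _ _
  · rw [card_image_of_injective _ hx]
    exact ((natDegree_lt_iff_degree_lt hP).mpr (degree_sum_fin_lt v)).trans_le hk

theorem hasMinWeightMod_powers {m k p : ℕ} (hp : p.Prime) (hm : m ≤ p) :
    HasMinWeightMod p (m + 1 - k)
      (Matrix.of fun (a : Fin m) (j : Fin k) => (a : ℤ) ^ (j : ℕ)) := by
  have := Fact.mk hp
  intro v hv
  have hx : Injective fun a : Fin m => ((a : ℕ) : ZMod p) := by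
    intro a b hab
    rw [ZMod.natCast_eq_natCast_iff', Nat.mod_eq_of_lt (by omega), Nat.mod_eq_of_lt (by omega)]
      at hab
    exact Fin.ext hab
  have hZ := card_filter_sum_pow_mul_eq_zero_lt hx hv
  have hsplit := card_filter_add_card_filter_not (s := (univ : Finset (Fin m)))
    (fun a => ∑ j : Fin k, ((a : ℕ) : ZMod p) ^ (j : ℕ) * v j = 0)
  simp only [card_univ, Fintype.card_fin] at hsplit
  have hN : hammingNorm ((Matrix.of fun (a : Fin m) (j : Fin k) => (a : ℤ) ^ (j : ℕ)).map
      (Int.cast : ℤ → ZMod p) *ᵥ v) =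
      #{a : Fin m | ¬ ∑ j : Fin k, ((a : ℕ) : ZMod p) ^ (j : ℕ) * v j = 0} := by
    simp [hammingNorm, mulVec, dotProduct]
  omega

instance (n : ℕ) : NeZero n.factorial := ⟨Nat.factorial_ne_zero n⟩

-- `ZMod p` is a `Fintype` only for `p ≠ 0`, so membership is decided classically.
open Classical in
noncomputable def badMod {β γ κ : Type*} [Fintype β] [DecidableEq β] [Fintype γ]
    [DecidableEq γ] [Fintype κ] [DecidableEq κ] (M p s : ℕ) [NeZero M] :
    Finset (Matrix (β × γ) κ (ZMod M)) :=
  {R | ∃ v : κ → ZMod p, v ≠ 0 ∧ s ≤ #(zeroBlocks (R.map ZMod.cast *ᵥ v))}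

theorem card_badMod_mul_le {β γ κ : Type*} [Fintype β] [DecidableEq β] [Fintype γ]
    [DecidableEq γ] [Fintype κ] [DecidableEq κ] {M p : ℕ} [NeZero M] (hp : p.Prime)
    (hpM : p ∣ M) (s : ℕ) :
    #(badMod (β := β) (γ := γ) (κ := κ) M p s) * p ^ (s * Fintype.card γ) ≤
      p ^ Fintype.card κ * 2 ^ Fintype.card β *
        M ^ (Fintype.card β * Fintype.card γ * Fintype.card κ) := by
  have := Fact.mk hp
  have h := card_filter_exists_le_card_zeroBlocks_mul_le (β := β) (γ := γ) (κ := κ)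
    (ZMod.castHom_surjective hpM) s
  simp only [ZMod.card] at h
  convert h using 3
  ext R
  simp only [badMod, mem_filter]
  rfl

theorem card_badMod_mul_two_pow_le {k p : ℕ} (hp : p.Prime) (hpk : p ≤ 2 * k) :
    #(badMod (β := Fin (2 * k)) (γ := Fin 4) (κ := Fin k) (2 * k).factorial p (k + 1)) *
        2 ^ (k + 4) ≤ (2 * k).factorial ^ (2 * k * 4 * k) := by
  have hcount := card_badMod_mul_le (β := Fin (2 * k)) (γ := Fin 4) (κ := Fin k) hp
    (Nat.dvd_factorial hp.pos hpk) (k + 1)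
  simp only [Fintype.card_fin] at hcount
  have hp2 : 2 ^ (k + 4) * (p ^ k * 2 ^ (2 * k)) ≤ p ^ ((k + 1) * 4) :=
    calc _ ≤ p ^ (k + 4) * (p ^ k * p ^ (2 * k)) := by gcongr <;> exact hp.two_le
      _ = _ := by ring
  refine Nat.le_of_mul_le_mul_right ?_ (pow_pos hp.pos ((k + 1) * 4))
  calc _ = 2 ^ (k + 4) * (#(badMod (2 * k).factorial p (k + 1)) * p ^ ((k + 1) * 4)) := by
        ring
    _ ≤ 2 ^ (k + 4) * (p ^ k * 2 ^ (2 * k) * (2 * k).factorial ^ (2 * k * 4 * k)) := by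
        gcongr
    _ ≤ p ^ ((k + 1) * 4) * (2 * k).factorial ^ (2 * k * 4 * k) := by
        rw [← mul_assoc]; gcongr
    _ = _ := mul_comm _ _

/-- Union bound over the primes `p ≤ 2k`, of which there are fewer than `2 ^ (k + 4)`. -/
theorem exists_forall_notMem_badMod (k : ℕ) :
    ∃ R : Matrix (Fin (2 * k) × Fin 4) (Fin k) (ZMod (2 * k).factorial),
      ∀ p, p.Prime → p ≤ 2 * k → R ∉ badMod (2 * k).factorial p (k + 1) := by
  set P := (range (2 * k + 1)).filter Nat.Prime
  have hP : #P < 2 ^ (k + 4) := by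
    have := Nat.lt_two_pow_self (n := k)
    have : #P ≤ 2 * k + 1 := (card_filter_le _ _).trans (card_range _).le
    rw [pow_add]
    omega
  by_contra! h
  have hcover : univ ⊆ P.biUnion (badMod (2 * k).factorial · (k + 1)) := fun R _ => by
    obtain ⟨p, hp, hpk, hR⟩ := h R
    exact mem_biUnion.mpr ⟨p, mem_filter.mpr ⟨mem_range.mpr (by omega), hp⟩, hR⟩
  have := (card_le_card hcover).trans card_biUnion_le
  rw [card_univ, Fintype.card_matrix] at this
  simp only [Fintype.card_prod, Fintype.card_fin, ZMod.card] at this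
  have hsum : (∑ p ∈ P, #(badMod (β := Fin (2 * k)) (γ := Fin 4) (κ := Fin k)
      (2 * k).factorial p (k + 1))) * 2 ^ (k + 4) <
        (2 * k).factorial ^ (2 * k * 4 * k) * 2 ^ (k + 4) :=
    calc _ ≤ ∑ _p ∈ P, (2 * k).factorial ^ (2 * k * 4 * k) := by
          rw [sum_mul]
          refine sum_le_sum fun p hp => ?_
          obtain ⟨hpk, hp⟩ := mem_filter.mp hp
          exact card_badMod_mul_two_pow_le hp (Nat.lt_succ_iff.mp (mem_range.mp hpk))
      _ < _ := by
          rw [sum_const, smul_eq_mul, mul_comm]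
          gcongr
  exact (Nat.mul_le_mul_right _ this).not_gt hsum

theorem exists_hasMinWeightMod_of_prime_le (k : ℕ) :
    ∃ R : Matrix (Fin (2 * k) × Fin 4) (Fin k) ℤ,
      ∀ p, p.Prime → p ≤ 2 * k → HasMinWeightMod p k R := by
  obtain ⟨R, hR⟩ := exists_forall_notMem_badMod k
  refine ⟨R.map fun x => (x.val : ℤ), fun p hp hpk v hv => ?_⟩
  have hmap : (R.map fun x => (x.val : ℤ)).map (Int.cast : ℤ → ZMod p) = R.map ZMod.cast := by
    ext; simp [ZMod.natCast_val]
  have hzero : #(zeroBlocks (R.map ZMod.cast *ᵥ v)) ≤ k := by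
    have := hR p hp hpk
    simp only [badMod, mem_filter, mem_univ, true_and, not_exists, not_and, not_le] at this
    exact Nat.lt_succ_iff.mp (this v hv)
  have hsplit := card_le_card_zeroBlocks_add_hammingNorm (R.map ZMod.cast *ᵥ v)
  rw [Fintype.card_fin] at hsplit
  rw [hmap]
  omega

theorem stmt13 :
    ∃ C δ : ℝ, 1 ≤ C ∧ 0 < δ ∧
      ∀ k : ℕ, 0 < k →
        ∃ n : ℕ, k ≤ n ∧ (n : ℝ) ≤ C * k ∧
          ∃ E : Matrix (Fin n) (Fin k) ℤ,
            ∀ p : ℕ, p.Prime →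
              (Function.Injective fun v : Fin k → ZMod p =>
                (E.map (Int.cast : ℤ → ZMod p)).mulVec v) ∧
              ∀ v : Fin k → ZMod p,
                (E.map (Int.cast : ℤ → ZMod p)).mulVec v ≠ 0 →
                  δ * n ≤ ((Finset.univ.filter
                    (fun i => (E.map (Int.cast : ℤ → ZMod p)).mulVec v i ≠ 0)).card : ℝ) := by
  refine ⟨10, 1 / 10, by norm_num, by norm_num, fun k hk => ?_⟩
  obtain ⟨R, hR⟩ := exists_hasMinWeightMod_of_prime_le k
  let V : Matrix (Fin (2 * k)) (Fin k) ℤ := Matrix.of fun a j => (a : ℤ) ^ (j : ℕ)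
  have hcard : Fintype.card (Fin (2 * k) ⊕ Fin (2 * k) × Fin 4) = 10 * k := by
    simp only [Fintype.card_sum, Fintype.card_prod, Fintype.card_fin]; ring
  let E := (fromRows V R).submatrix (Fintype.equivFinOfCardEq hcard).symm id
  have hE (p : ℕ) (hp : p.Prime) : HasMinWeightMod p k E := by
    refine HasMinWeightMod.submatrix ?_ _
    rcases le_or_gt p (2 * k) with hpk | hpk
    · exact (hR p hp hpk).fromRows_right V
    · exact ((hasMinWeightMod_powers hp hpk.le).mono (by omega)).fromRows_left R
  refine ⟨10 * k, by omega, by push_cast; linarith, E, fun p hp => ⟨(hE p hp).injective hk,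
    fun v hv => ?_⟩⟩
  have hv0 : v ≠ 0 := by rintro rfl; simp at hv
  calc (1 / 10 : ℝ) * (10 * k : ℕ) = k := by push_cast; ring
    _ ≤ _ := by exact_mod_cast hE p hp v hv0
end

section
/- Let 0 < α < 1 be a real number, let L and R be finite sets, and let adj ⊆ L × R be a bipartite adjacency relation which is an α-left unique neighbor expander, i.e., for every nonempty subset S ⊆ L with |S| ≤ α·|L| there exists w ∈ R such that exactly one element v ∈ S satisfies adj(v, w). Let π : ℤ^L → ℤ^R be the ℤ-linear map defined by (π f)(w) = Σ_{v ∈ L, adj(v,w)} f(v). Then for every f ∈ ker π and every prime number p, either f(v) ≡ 0 (mod p) for every v ∈ L, or the number of v ∈ L with f(v) ≢ 0 (mod p) is at least α·|L|. -/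
theorem stmt15 (α : ℝ) (h0 : 0 < α) (h1 : α < 1)
    (L R : Type*) [Fintype L] [Fintype R]
    (adj : L → R → Prop) [∀ v w, Decidable (adj v w)]
    (hexp : ∀ S : Finset L, S.Nonempty → (S.card : ℝ) ≤ α * Fintype.card L →
      ∃ w : R, ∃! v : L, v ∈ S ∧ adj v w)
    (f : L → ℤ)
    (hf : ∀ w : R, ∑ v ∈ Finset.univ.filter (fun v => adj v w), f v = 0)
    (p : ℕ) (hp : p.Prime) :
    (∀ v : L, ((f v : ZMod p) = 0)) ∨
      α * Fintype.card L ≤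
        ((Finset.univ.filter (fun v : L => (f v : ZMod p) ≠ 0)).card : ℝ) := by
  classical
  by_contra hcon
  push_neg at hcon
  obtain ⟨⟨v0, hv0⟩, hlt⟩ := hcon
  set S : Finset L := Finset.univ.filter (fun v : L => (f v : ZMod p) ≠ 0) with hS
  have hSne : S.Nonempty := ⟨v0, by simp [hS, hv0]⟩
  obtain ⟨w, v, ⟨hvS, hvw⟩, huniq⟩ := hexp S hSne hlt.le
  have hsum : ((∑ x ∈ Finset.univ.filter (fun x => adj x w), f x : ℤ) : ZMod p) = 0 := by
    rw [hf w]; simp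
  rw [Int.cast_sum] at hsum
  have hsingle : ∑ x ∈ Finset.univ.filter (fun x => adj x w), ((f x : ZMod p)) = (f v : ZMod p) := by
    rw [Finset.sum_eq_single v]
    · intro b hb hbv
      by_contra hb0
      have hbS : b ∈ S := by simp [hS, hb0]
      exact hbv (huniq b ⟨hbS, (Finset.mem_filter.mp hb).2⟩)
    · intro hv
      exact absurd (Finset.mem_filter.mpr ⟨Finset.mem_univ v, hvw⟩) hv
  rw [hsingle] at hsum
  exact (Finset.mem_filter.mp hvS).2 hsum
end

section
/- Let δ and E' be real numbers with 0 < δ < 1/3 and E' > 0. Then there exists a real constant C = C(E', δ) > 0 such that the following holds: for every finite group G and every positive integer k such that G is generated by some set of at most k elements, if for every integer N ≥ 2 the number of maximal proper subgroups of G of index N is at most N^(E'·k), then there exists a finite nonempty multiset A of elements of G with |A| ≤ C·k such that A has detection probability at least δ in G. -/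
/-!
Choose `m = O(k)` elements of `G` independently and uniformly at random. For a maximal subgroup
`H` of index `N`, a Chernoff bound with weight `√N` on the elements of `H` shows that the
probability that at least a `2/3` fraction of the sample lies in `H` is at most `N ^ (-m/30)`.
Summing over the at most `N ^ (E' k)` maximal subgroups of each index `N ≥ 2` gives a total
failure probability below `∑ N⁻² / 2 < 1` once `m / 30 ≥ E' k + 3`, so some sample meets every
maximal, hence every proper, subgroup in fewer than `(1 - δ) m` entries.
-/

open scoped Classical

open Finset

theorem card_hits_ge_mul_pow_le {α : Type*} [Fintype α] (p : α → Prop) (m T : ℕ) {c : ℝ}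
    (hc : 1 ≤ c) :
    (#{a : Fin m → α | T ≤ #{i | p (a i)}} : ℝ) * c ^ T
      ≤ (Fintype.card α + (c - 1) * #{x | p x}) ^ m := by
  set w : α → ℝ := fun x => if p x then c else 1
  have hw : ∀ x, 0 ≤ w x := fun x => by unfold w; split_ifs <;> linarith
  have hprod : ∀ a : Fin m → α, ∏ i, w (a i) = c ^ #{i | p (a i)} := fun a => by
    simp only [w, prod_ite, prod_const, one_pow, mul_one]
  have hsum : ∑ x, w x = Fintype.card α + (c - 1) * #{x | p x} := by
    have : ∀ x, w x = 1 + (c - 1) * if p x then 1 else 0 := fun x => by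
      unfold w; split_ifs <;> ring
    simp only [this, sum_add_distrib, ← mul_sum, sum_boole, sum_const, card_univ, nsmul_one]
  calc (#{a : Fin m → α | T ≤ #{i | p (a i)}} : ℝ) * c ^ T
      = ∑ a : Fin m → α with T ≤ #{i | p (a i)}, c ^ T := by rw [sum_const, nsmul_eq_mul]
    _ ≤ ∑ a : Fin m → α with T ≤ #{i | p (a i)}, ∏ i, w (a i) :=
        sum_le_sum fun a ha => (hprod a).symm ▸ pow_le_pow_right₀ hc (mem_filter.1 ha).2
    _ ≤ ∑ a : Fin m → α, ∏ i, w (a i) :=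
        sum_le_sum_of_subset_of_nonneg (filter_subset _ _) fun a _ _ => prod_nonneg fun i _ => hw _
    _ = (∑ x, w x) ^ m := by rw [← Fintype.prod_sum, prod_const, card_univ, Fintype.card_fin]
    _ = _ := by rw [hsum]

theorem pow_ten_add_pow_five_sub_one_le {u : ℝ} (h1 : 1 ≤ u) (h2 : 2 ≤ u ^ 10) :
    u ^ 10 + u ^ 5 - 1 ≤ u ^ 13 := by
  have key : 2 / 3 ≤ u ^ 10 - u ^ 2 := by
    rcases le_total (u ^ 2) (4 / 3) with h | h
    · linarith
    · have h8 : 16 / 9 ≤ u ^ 8 := by nlinarith [one_le_pow₀ (n := 4) h1]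
      nlinarith
  have hu : 0 ≤ u - 1 := by linarith
  have : 0 ≤ (u ^ 10 - u ^ 2) * (u ^ 2 + u + 1) - (u + 1) := by nlinarith
  -- `u ^ 13 - (u ^ 10 + u ^ 5 - 1) = (u - 1) * ((u ^ 10 - u ^ 2) * (u ^ 2 + u + 1) - (u + 1))`
  nlinarith [mul_nonneg hu this]

theorem card_hits_ge_mul_index_rpow_le {G : Type*} [Group G] [Fintype G] (H : Subgroup G)
    (hH : 2 ≤ H.index) {m T : ℕ} (hT : 2 * m ≤ 3 * T) :
    (#{a : Fin m → G | T ≤ #{i | a i ∈ H}} : ℝ) * (H.index : ℝ) ^ ((m : ℝ) / 30)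
      ≤ Fintype.card G ^ m := by
  have hN : (2 : ℝ) ≤ H.index := by exact_mod_cast hH
  -- with `u = N ^ (1/30)` the Chernoff weight `√N = u ^ 15` and every exponent is a natural number
  set u : ℝ := (H.index : ℝ) ^ (1 / 30 : ℝ)
  have hu1 : 1 ≤ u := Real.one_le_rpow (by linarith) (by norm_num)
  have hNu : (H.index : ℝ) = u ^ 30 := by
    rw [← Real.rpow_natCast, ← Real.rpow_mul (by linarith)]; norm_num
  have hNm : (H.index : ℝ) ^ ((m : ℝ) / 30) = u ^ m := by
    rw [← Real.rpow_natCast, ← Real.rpow_mul (by linarith)]; ring_nf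
  have hcard : (#{x | x ∈ H} : ℝ) * u ^ 30 = Fintype.card G := by
    rw [← hNu, ← Fintype.card_subtype, ← Nat.card_eq_fintype_card, ← Nat.card_eq_fintype_card]
    exact_mod_cast H.card_mul_index
  have hbase :
      (Fintype.card G + (u ^ 15 - 1) * #{x | x ∈ H} : ℝ) ≤ Fintype.card G * u ^ 9 := by
    have hpoly := pow_ten_add_pow_five_sub_one_le (u := u ^ 3) (one_le_pow₀ hu1)
      (by rw [← pow_mul, ← hNu]; exact hN)
    norm_num [← pow_mul] at hpoly
    rw [← hcard]
    nlinarith [mul_le_mul_of_nonneg_left hpoly (Nat.cast_nonneg (α := ℝ) #{x | x ∈ H})]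
  have hchernoff := card_hits_ge_mul_pow_le (fun x => x ∈ H) m T (one_le_pow₀ (n := 15) hu1)
  have hpowT : u ^ (10 * m) ≤ (u ^ 15) ^ T := by
    rw [← pow_mul]; exact pow_le_pow_right₀ hu1 (by omega)
  have hbad : (#{a : Fin m → G | T ≤ #{i | a i ∈ H}} : ℝ) * u ^ m * u ^ (9 * m)
      ≤ Fintype.card G ^ m * u ^ (9 * m) := by
    calc (#{a : Fin m → G | T ≤ #{i | a i ∈ H}} : ℝ) * u ^ m * u ^ (9 * m)
        = #{a : Fin m → G | T ≤ #{i | a i ∈ H}} * u ^ (10 * m) := by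
          rw [mul_assoc, ← pow_add, show m + 9 * m = 10 * m by ring]
      _ ≤ #{a : Fin m → G | T ≤ #{i | a i ∈ H}} * (u ^ 15) ^ T :=
          mul_le_mul_of_nonneg_left hpowT (Nat.cast_nonneg _)
      _ ≤ (Fintype.card G + (u ^ 15 - 1) * #{x | x ∈ H}) ^ m := hchernoff
      _ ≤ (Fintype.card G * u ^ 9) ^ m := by
          gcongr
          have := one_le_pow₀ (n := 15) hu1
          exact add_nonneg (Nat.cast_nonneg _) (mul_nonneg (by linarith) (Nat.cast_nonneg _))
      _ = Fintype.card G ^ m * u ^ (9 * m) := by rw [mul_pow, pow_mul]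
  rw [hNm]
  exact le_of_mul_le_mul_right hbad (by positivity)

theorem sum_rpow_neg_le_half {ι : Type*} (S : Finset ι) (f : ι → ℕ) (hf : ∀ i ∈ S, 2 ≤ f i)
    {e s : ℝ} (hs : e + 3 ≤ s)
    (hcount : ∀ N, 2 ≤ N → (#{i ∈ S | f i = N} : ℝ) ≤ (N : ℝ) ^ e) :
    ∑ i ∈ S, (f i : ℝ) ^ (-s) ≤ 1 / 2 := by
  have hterm : ∀ N ∈ S.image f, #{i ∈ S | f i = N} • (N : ℝ) ^ (-s) ≤ (N ^ 2 : ℝ)⁻¹ / 2 := by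
    intro N hN
    obtain ⟨i, hi, rfl⟩ := mem_image.1 hN
    have h2 : (2 : ℝ) ≤ f i := by exact_mod_cast hf i hi
    have h0 : (0 : ℝ) < f i := by linarith
    calc #{j ∈ S | f j = f i} • (f i : ℝ) ^ (-s) ≤ (f i : ℝ) ^ e * (f i : ℝ) ^ (-s) := by
          rw [nsmul_eq_mul]; gcongr; exact hcount _ (hf i hi)
      _ ≤ (f i : ℝ) ^ (-3 : ℝ) := by
          rw [← Real.rpow_add h0]
          exact Real.rpow_le_rpow_of_exponent_le (by linarith) (by linarith)
      _ = ((f i : ℝ) ^ 3)⁻¹ := by rw [Real.rpow_neg h0.le]; norm_cast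
      _ ≤ ((f i : ℝ) ^ 2)⁻¹ / 2 := by
          rw [div_eq_mul_inv, ← mul_inv, pow_succ]; gcongr
  have hsub : S.image f ⊆ Ioo 1 (S.sup f + 1) := by
    intro N hN
    obtain ⟨i, hi, rfl⟩ := mem_image.1 hN
    exact mem_Ioo.2 ⟨hf i hi, Nat.lt_succ_of_le (le_sup hi)⟩
  calc ∑ i ∈ S, (f i : ℝ) ^ (-s)
      = ∑ N ∈ S.image f, #{i ∈ S | f i = N} • (N : ℝ) ^ (-s) :=
        sum_comp (fun N : ℕ => (N : ℝ) ^ (-s)) f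
    _ ≤ ∑ N ∈ S.image f, (N ^ 2 : ℝ)⁻¹ / 2 := sum_le_sum hterm
    _ ≤ ∑ N ∈ Ioo 1 (S.sup f + 1), (N ^ 2 : ℝ)⁻¹ / 2 :=
        sum_le_sum_of_subset_of_nonneg hsub fun _ _ _ => by positivity
    _ ≤ 1 / 2 := by
        rw [← sum_div]
        have := sum_Ioo_inv_sq_le (α := ℝ) 1 (S.sup f + 1)
        norm_num at this ⊢
        linarith

theorem exists_tuple_forall_isCoatom_card_lt {G : Type*} [Group G] [Finite G] {m T : ℕ}
    (hT : 2 * m ≤ 3 * T) {e : ℝ} (hm : e + 3 ≤ (m : ℝ) / 30)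
    (hcount : ∀ N : ℕ, 2 ≤ N →
      (Nat.card {H : Subgroup G // IsCoatom H ∧ H.index = N} : ℝ) ≤ (N : ℝ) ^ e) :
    ∃ a : Fin m → G, ∀ H : Subgroup G, IsCoatom H → #{i | a i ∈ H} < T := by
  cases nonempty_fintype G
  let : Fintype (Subgroup G) := Fintype.ofFinite _
  set S : Finset (Subgroup G) := {H | IsCoatom H}
  set bad : Subgroup G → Finset (Fin m → G) := fun H => {a | T ≤ #{i | a i ∈ H}}
  have hindex : ∀ H ∈ S, 2 ≤ H.index := fun H hH =>
    Subgroup.one_lt_index_of_ne_top (mem_filter.1 hH).2.1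
  have hbad : ∀ H ∈ S,
      (#(bad H) : ℝ) ≤ Fintype.card G ^ m * (H.index : ℝ) ^ (-((m : ℝ) / 30)) := by
    intro H hH
    have hN : (0 : ℝ) < H.index := by exact_mod_cast (hindex H hH).trans_lt' two_pos
    rw [Real.rpow_neg hN.le, ← div_eq_mul_inv, le_div_iff₀ (by positivity)]
    exact card_hits_ge_mul_index_rpow_le H (hindex H hH) hT
  have hsum : ∑ H ∈ S, (H.index : ℝ) ^ (-((m : ℝ) / 30)) ≤ 1 / 2 := by
    refine sum_rpow_neg_le_half S _ hindex hm fun N hN => ?_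
    convert hcount N hN using 2
    rw [Nat.card_eq_fintype_card, Fintype.card_subtype, filter_filter]
  have hlt : (#(S.biUnion bad) : ℝ) < #(univ : Finset (Fin m → G)) := by
    have hpos : (0 : ℝ) < Fintype.card G ^ m := by positivity
    calc (#(S.biUnion bad) : ℝ) ≤ ∑ H ∈ S, (#(bad H) : ℝ) := by exact_mod_cast card_biUnion_le
      _ ≤ ∑ H ∈ S, Fintype.card G ^ m * (H.index : ℝ) ^ (-((m : ℝ) / 30)) := sum_le_sum hbad
      _ ≤ Fintype.card G ^ m * (1 / 2) := by rw [← mul_sum]; gcongr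
      _ < #(univ : Finset (Fin m → G)) := by
          simp only [card_univ, Fintype.card_pi, prod_const, Fintype.card_fin]
          push_cast
          linarith
  obtain ⟨a, -, ha⟩ := exists_mem_notMem_of_card_lt_card (by exact_mod_cast hlt)
  refine ⟨a, fun H hH => not_le.1 fun hle => ha (mem_biUnion.2 ⟨H, ?_, ?_⟩)⟩
  · exact mem_filter.2 ⟨mem_univ _, hH⟩
  · exact mem_filter.2 ⟨mem_univ _, hle⟩

theorem detects_of_forall_isCoatom {G : Type*} [Group G] [IsCoatomic (Subgroup G)]
    (A : Multiset G) (δ : ℝ)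
    (h : ∀ H : Subgroup G, IsCoatom H →
      ((A.filter (fun a => a ∈ H)).card : ℝ) ≤ (1 - δ) * (Multiset.card A : ℝ)) :
    Detects A δ := by
  intro H hH
  obtain ⟨M, hM, hHM⟩ := (eq_top_or_exists_le_coatom H).resolve_left hH
  refine le_trans ?_ (h M hM)
  exact_mod_cast Multiset.card_le_card (Multiset.monotone_filter_right _ fun _ hx => hHM hx)

theorem card_filter_map_univ_val {α β : Type*} [Fintype α] (f : α → β) (p : β → Prop)
    [DecidablePred p] : Multiset.card ((univ.val.map f).filter p) = #{x | p (f x)} := by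
  rw [Multiset.filter_map, Multiset.card_map]
  rfl

theorem stmt17_general (δ E' : ℝ) (hδ : δ < 1 / 3) (hE' : 0 < E') :
    ∃ C : ℝ, 0 < C ∧
      ∀ (G : Type*) [Group G] [Finite G] (k : ℕ), 0 < k →
        (∃ S : Finset G, S.card ≤ k ∧ Subgroup.closure (S : Set G) = ⊤) →
        (∀ N : ℕ, 2 ≤ N →
          (Nat.card {H : Subgroup G // IsCoatom H ∧ H.index = N} : ℝ) ≤
            (N : ℝ) ^ (E' * (k : ℝ))) →
        ∃ A : Multiset G, A ≠ 0 ∧ (Multiset.card A : ℝ) ≤ C * k ∧ Detects A δ := by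
  refine ⟨30 * E' + 91, by positivity, fun G _ _ k hk _ hcount => ?_⟩
  have hk1 : (1 : ℝ) ≤ k := by exact_mod_cast hk
  have hEk : 0 ≤ E' * k := by positivity
  set m := ⌈30 * (E' * k + 3)⌉₊
  have hm_ge : 30 * (E' * k + 3) ≤ (m : ℝ) := Nat.le_ceil _
  have hm_le : (m : ℝ) ≤ (30 * E' + 91) * k := by
    have := Nat.ceil_lt_add_one (show 0 ≤ 30 * (E' * k + 3) by positivity)
    nlinarith
  set T := ⌈(1 - δ) * m⌉₊
  have hT : 2 * m ≤ 3 * T := by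
    have : (1 - δ) * m ≤ (T : ℝ) := Nat.le_ceil _
    exact_mod_cast (show (2 * m : ℝ) ≤ 3 * T by nlinarith)
  obtain ⟨a, ha⟩ := exists_tuple_forall_isCoatom_card_lt hT (e := E' * k) (by linarith) hcount
  have hcard : Multiset.card (univ.val.map a) = m := by simp
  refine ⟨univ.val.map a, ?_, by rw [hcard]; exact hm_le, ?_⟩
  · rw [← Multiset.card_pos, hcard]
    exact_mod_cast (show (0 : ℝ) < m by linarith)
  · refine detects_of_forall_isCoatom _ _ fun H hH => ?_
    rw [card_filter_map_univ_val, hcard]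
    exact (Nat.lt_ceil.1 (ha H hH)).le

theorem stmt17 (δ E' : ℝ) (hδ0 : 0 < δ) (hδ : δ < 1 / 3) (hE' : 0 < E') :
    ∃ C : ℝ, 0 < C ∧
      ∀ (G : Type*) [Group G] [Finite G] (k : ℕ), 0 < k →
        (∃ S : Finset G, S.card ≤ k ∧ Subgroup.closure (S : Set G) = ⊤) →
        (∀ N : ℕ, 2 ≤ N →
          (Nat.card {H : Subgroup G // IsCoatom H ∧ H.index = N} : ℝ) ≤
            (N : ℝ) ^ (E' * (k : ℝ))) →
        ∃ A : Multiset G, A ≠ 0 ∧ (Multiset.card A : ℝ) ≤ C * k ∧ Detects A δ :=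
  stmt17_general δ E' hδ hE'
end

section
/- For every positive integer k and every finite solvable group G generated by some set of at most k elements, there exists a finite nonempty multiset A of elements of G with |A| ≤ 85·k such that A has detection probability at least 1/10 in G, i.e., for every proper subgroup H of G the number of elements of A (counted with multiplicity) lying in H is at most (9/10)·|A|. -/
open scoped Classical

/-!
Induction on `|G|`. A minimal normal subgroup `N` of a solvable group is abelian. Lift a good
tuple of `G ⧸ N` to `G` and multiply its entries by independent uniform elements of `N`.
A proper subgroup `H` with `H ⊔ N ≠ ⊤` is handled by its image in `G ⧸ N`. Otherwise `H ⊓ N`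
is normal (as `N` is abelian), hence trivial, so `H` is a complement of `N`: every coset of `N`
meets `H` in exactly one point, so `H` contains `t` of the `m` entries with probability at most
`C(m, t) |N|⁻ᵗ`. A complement is generated by the translates of the `k` generators lying in it,
so there are at most `|N| ^ k` complements, and the union bound succeeds once
`C(m, t) 2 ^ k < 2 ^ t`.
-/

open Finset

section Counting

variable {ι α β : Type*} [Fintype α] [Fintype β]

theorem card_filter_forall_mem_le (p : β → α → Prop) (hp : ∀ j, {x | p j x}.Subsingleton)
    (T : Finset β) :
    #{w : β → α | ∀ j ∈ T, p j (w j)} ≤ Fintype.card α ^ (Fintype.card β - #T) := calc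
  _ ≤ #(Fintype.piFinset fun j => if j ∈ T then ({x | p j x} : Finset α) else univ) := by
    refine card_le_card fun w hw => Fintype.mem_piFinset.2 fun j => ?_
    split_ifs with hj
    · exact mem_filter.2 ⟨mem_univ _, (mem_filter.1 hw).2 j hj⟩
    · exact mem_univ _
  _ ≤ ∏ j, if j ∈ T then 1 else Fintype.card α := by
    rw [Fintype.card_piFinset]
    refine prod_le_prod' fun j _ => ?_
    split_ifs
    · exact card_le_one.2 fun x hx y hy => hp j (mem_filter.1 hx).2 (mem_filter.1 hy).2
    · rfl
  _ = Fintype.card α ^ (Fintype.card β - #T) := by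
    rw [prod_ite, prod_const_one, one_mul, prod_const, filter_not, filter_mem_eq_inter,
      univ_inter, card_sdiff_of_subset (subset_univ T), card_univ]

theorem card_filter_le_choose_mul_pow (p : β → α → Prop)
    (hp : ∀ j, {x | p j x}.Subsingleton) (t : ℕ) :
    #{w : β → α | t ≤ #{j | p j (w j)}} ≤
      (Fintype.card β).choose t * Fintype.card α ^ (Fintype.card β - t) := calc
  _ ≤ #((powersetCard t univ).biUnion fun T => {w : β → α | ∀ j ∈ T, p j (w j)}) := by
    refine card_le_card fun w hw => ?_
    obtain ⟨T, hT, hTcard⟩ := exists_subset_card_eq (mem_filter.1 hw).2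
    exact mem_biUnion.2 ⟨T, mem_powersetCard.2 ⟨subset_univ T, hTcard⟩,
      mem_filter.2 ⟨mem_univ w, fun j hj => (mem_filter.1 (hT hj)).2⟩⟩
  _ ≤ _ := by
    rw [← card_univ, ← card_powersetCard]
    refine card_biUnion_le_card_mul _ _ _ fun T hT => ?_
    rw [card_univ, ← (mem_powersetCard.1 hT).2]
    exact card_filter_forall_mem_le p hp T

theorem exists_forall_card_filter_lt [Finite ι] (p : ι → β → α → Prop)
    (hp : ∀ i j, {x | p i j x}.Subsingleton) {t : ℕ}
    (h : Nat.card ι * ((Fintype.card β).choose t * Fintype.card α ^ (Fintype.card β - t)) <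
      Fintype.card α ^ Fintype.card β) :
    ∃ w : β → α, ∀ i, #{j | p i j (w j)} < t := by
  have := Fintype.ofFinite ι
  by_contra! hbad
  refine h.not_ge ?_
  calc Fintype.card α ^ Fintype.card β = #(univ : Finset (β → α)) := by simp
    _ ≤ #(univ.biUnion fun i => {w : β → α | t ≤ #{j | p i j (w j)}}) := by
      refine card_le_card fun w _ => ?_
      obtain ⟨i, hi⟩ := hbad w
      exact mem_biUnion.2 ⟨i, mem_univ i, mem_filter.2 ⟨mem_univ w, hi⟩⟩
    _ ≤ _ := by
      rw [Nat.card_eq_fintype_card, ← card_univ]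
      exact card_biUnion_le_card_mul _ _ _ fun i _ =>
        card_filter_le_choose_mul_pow (p i) (hp i) t

end Counting

theorem Nat.choose_mul_pow_le_succ_pow (n i a : ℕ) : n.choose i * a ^ i ≤ (a + 1) ^ n := by
  rcases lt_or_ge n i with hni | hin
  · simp [Nat.choose_eq_zero_of_lt hni]
  rw [add_pow]
  calc n.choose i * a ^ i = a ^ i * 1 ^ (n - i) * n.choose i := by ring
    _ ≤ _ := single_le_sum (f := fun i => a ^ i * 1 ^ (n - i) * n.choose i)
        (fun _ _ => Nat.zero_le _) (mem_range.2 (Nat.lt_succ_of_le hin))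

theorem Nat.mul_pow_lt_pow_of_mul_two_pow_lt {c k t q : ℕ} (hq : 2 ≤ q)
    (h : c * 2 ^ k < 2 ^ t) : c * q ^ k < q ^ t := by
  rcases Nat.eq_zero_or_pos c with rfl | hc
  · rw [zero_mul]; positivity
  obtain ⟨d, rfl⟩ : ∃ d, t = k + d :=
    Nat.exists_eq_add_of_le ((Nat.pow_lt_pow_iff_right (by norm_num)).1
      ((Nat.le_mul_of_pos_left _ hc).trans_lt h)).le
  have hcd : c < q ^ d := by
    rw [pow_add, mul_comm (2 ^ k)] at h
    exact (Nat.lt_of_mul_lt_mul_right h).trans_le (Nat.pow_le_pow_left hq d)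
  rw [pow_add, mul_comm (q ^ k)]
  exact Nat.mul_lt_mul_of_pos_right hcd (by positivity)

theorem choose_mul_two_pow_lt {k : ℕ} (hk : 0 < k) :
    (85 * k).choose (9 * (85 * k) / 10 + 1) * 2 ^ k < 2 ^ (9 * (85 * k) / 10 + 1) := by
  set t := 9 * (85 * k) / 10 + 1
  -- `C(85k, t) 9 ^ t ≤ 10 ^ (85k)`, and `2t ≥ 153k` with `4 · 10 ^ 170 < 18 ^ 153`.
  have hsq : (10 ^ (85 * k) * 2 ^ k) ^ 2 < (18 ^ t) ^ 2 := calc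
    (10 ^ (85 * k) * 2 ^ k) ^ 2 = (10 ^ 170 * 2 ^ 2) ^ k := by
      rw [mul_pow, mul_pow, ← pow_mul, ← pow_mul, ← pow_mul, ← pow_mul]
      ring_nf
    _ < (18 ^ 153) ^ k := Nat.pow_lt_pow_left (by norm_num) hk.ne'
    _ ≤ (18 ^ t) ^ 2 := by
      rw [← pow_mul, ← pow_mul]
      exact Nat.pow_le_pow_right (by norm_num) (by omega)
  have h18 := lt_of_pow_lt_pow_left₀ 2 (Nat.zero_le _) hsq
  refine Nat.lt_of_mul_lt_mul_right (a := 9 ^ t) ?_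
  calc (85 * k).choose t * 2 ^ k * 9 ^ t = (85 * k).choose t * 9 ^ t * 2 ^ k := by ring
    _ ≤ 10 ^ (85 * k) * 2 ^ k := Nat.mul_le_mul_right _ (Nat.choose_mul_pow_le_succ_pow _ _ _)
    _ < 18 ^ t := h18
    _ = 2 ^ t * 9 ^ t := by rw [← mul_pow]; rfl

namespace Subgroup

open scoped Pointwise

variable {G : Type*} [Group G] {H N : Subgroup G}

theorem exists_mul_mem_of_sup_eq_top [N.Normal] (h : H ⊔ N = ⊤) (a : G) :
    ∃ v ∈ N, a * v ∈ H := by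
  obtain ⟨x, hx, v, hv, rfl⟩ : a ∈ (H : Set G) * N := by rw [← mul_normal, h]; trivial
  exact ⟨v⁻¹, inv_mem hv, by simpa⟩

theorem subsingleton_mul_mem_of_inf_eq_bot (h : H ⊓ N = ⊥) (a : G) :
    {v : N | a * v ∈ H}.Subsingleton := by
  intro v hv w hw
  have hvw : (v : G)⁻¹ * w ∈ H ⊓ N :=
    ⟨by simpa [mul_assoc] using H.mul_mem (H.inv_mem hv) hw, N.mul_mem (N.inv_mem v.2) w.2⟩
  rw [h, mem_bot, inv_mul_eq_one] at hvw
  exact Subtype.ext hvw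

theorem eq_of_le_of_sup_eq_top_of_inf_eq_bot [N.Normal] {K : Subgroup G} (hKH : K ≤ H)
    (hK : K ⊔ N = ⊤) (hH : H ⊓ N = ⊥) : K = H := by
  refine le_antisymm hKH fun h hh => ?_
  obtain ⟨v, hv, hhv⟩ := exists_mul_mem_of_sup_eq_top hK h
  have hv1 : (⟨v, hv⟩ : N) = 1 :=
    subsingleton_mul_mem_of_inf_eq_bot hH h (hKH hhv) (by simpa using hh)
  simpa [show v = 1 from congrArg Subtype.val hv1] using hhv

theorem exists_eq_closure_of_isCompl [N.Normal] {S : Set G} (hS : closure S = ⊤)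
    (hH : IsCompl H N) : ∃ f : S → N, H = closure (Set.range fun s : S => (s : G) * f s) := by
  choose f hfN hf using fun s : S => exists_mul_mem_of_sup_eq_top hH.sup_eq_top s
  refine ⟨fun s => ⟨f s, hfN s⟩,
    (eq_of_le_of_sup_eq_top_of_inf_eq_bot ?_ ?_ hH.inf_eq_bot).symm⟩
  · exact (closure_le _).2 (Set.range_subset_iff.2 hf)
  · refine eq_top_iff.2 (hS ▸ (closure_le _).2 fun s hs => ?_)
    have : s = s * f ⟨s, hs⟩ * (f ⟨s, hs⟩)⁻¹ := by group
    rw [this]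
    exact mul_mem (mem_sup_left (subset_closure ⟨⟨s, hs⟩, rfl⟩))
      (mem_sup_right (inv_mem (hfN _)))

theorem card_isCompl_le [Finite G] [N.Normal] {S : Finset G} (hS : closure (S : Set G) = ⊤) :
    Nat.card {H : Subgroup G // IsCompl H N} ≤ Nat.card N ^ #S := by
  choose f hf using fun H : {H : Subgroup G // IsCompl H N} =>
    exists_eq_closure_of_isCompl hS H.2
  refine (Nat.card_le_card_of_injective f fun H₁ H₂ h => Subtype.ext ?_).trans_eq ?_
  · rw [hf H₁, hf H₂, h]
  · simp [Nat.card_fun]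

theorem commutator_eq_bot_of_minimal [Group.IsSolvable G]
    (hN : Minimal (fun M : Subgroup G => M.Normal ∧ M ≠ ⊥) N) : ⁅N, N⁆ = ⊥ := by
  have := hN.prop.1
  by_contra h
  have hperfect : N ≤ ⁅N, N⁆ :=
    hN.le_of_le ⟨commutator_normal N N, h⟩ (commutator_le_left N N)
  have hder : ∀ n, N ≤ derivedSeries G n := by
    intro n
    induction n with
    | zero => exact le_top
    | succ n ih => exact hperfect.trans (commutator_mono ih ih)
  obtain ⟨n, hn⟩ := Group.IsSolvable.solvable (G := G)
  exact hN.prop.2 (eq_bot_iff.2 (hn ▸ hder n))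

theorem normal_inf_of_sup_eq_top [hN : N.Normal] (hcomm : ⁅N, N⁆ = ⊥) (h : H ⊔ N = ⊤) :
    (H ⊓ N).Normal := by
  refine ⟨fun x hx g => ⟨?_, hN.conj_mem x hx.2 g⟩⟩
  obtain ⟨y, hy, v, hv, rfl⟩ : g ∈ (H : Set G) * N := by rw [← mul_normal, h]; trivial
  have hvx : v * x = x * v := by
    have := commutator_mem_commutator hv hx.2
    rwa [hcomm, mem_bot, commutatorElement_eq_one_iff_mul_comm] at this
  rw [show y * v * x * (y * v)⁻¹ = y * (v * x * v⁻¹) * y⁻¹ by group, hvx,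
    mul_inv_cancel_right]
  exact H.mul_mem (H.mul_mem hy hx.1) (H.inv_mem hy)

theorem isCompl_of_sup_eq_top (hN : Minimal (fun M : Subgroup G => M.Normal ∧ M ≠ ⊥) N)
    (hcomm : ⁅N, N⁆ = ⊥) (hH : H ≠ ⊤) (h : H ⊔ N = ⊤) : IsCompl H N := by
  have := hN.prop.1
  refine .of_eq (by_contra fun hbot => hH ?_) h
  have := normal_inf_of_sup_eq_top hcomm h
  have hNH : N ≤ H := (hN.le_of_le ⟨this, hbot⟩ inf_le_right).trans inf_le_left
  rwa [sup_eq_left.2 hNH] at h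

theorem map_mk'_ne_top [N.Normal] (h : H ⊔ N ≠ ⊤) : H.map (QuotientGroup.mk' N) ≠ ⊤ := by
  intro htop
  apply h
  rw [← QuotientGroup.ker_mk' N, ← comap_map_eq, htop, comap_top]

theorem exists_forall_isCompl_card_filter_mul_mem_lt [Finite G] [N.Normal] (hN : N ≠ ⊥)
    {S : Finset G} (hS : closure (S : Set G) = ⊤) {m t : ℕ} (htm : t ≤ m)
    (hnum : m.choose t * 2 ^ #S < 2 ^ t) (b : Fin m → G) :
    ∃ w : Fin m → N, ∀ H : Subgroup G, IsCompl H N → #{j | b j * w j ∈ H} < t := by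
  have := Fintype.ofFinite N
  have hq : 2 ≤ Fintype.card N :=
    Nat.card_eq_fintype_card (α := N) ▸ N.one_lt_card_iff_ne_bot.2 hN
  have hbound : Nat.card {H : Subgroup G // IsCompl H N} *
      (m.choose t * Fintype.card N ^ (m - t)) < Fintype.card N ^ m := calc
    _ ≤ Fintype.card N ^ #S * (m.choose t * Fintype.card N ^ (m - t)) :=
      Nat.mul_le_mul_right _ (Nat.card_eq_fintype_card (α := N) ▸ card_isCompl_le hS)
    _ = m.choose t * Fintype.card N ^ #S * Fintype.card N ^ (m - t) := by ring
    _ < Fintype.card N ^ t * Fintype.card N ^ (m - t) :=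
      Nat.mul_lt_mul_of_pos_right (Nat.mul_pow_lt_pow_of_mul_two_pow_lt hq hnum) (by positivity)
    _ = Fintype.card N ^ m := by rw [← pow_add, Nat.add_sub_cancel' htm]
  rw [← Fintype.card_fin m] at hbound
  obtain ⟨w, hw⟩ := exists_forall_card_filter_lt
    (fun (H : {H : Subgroup G // IsCompl H N}) j (v : N) => b j * v ∈ (H : Subgroup G))
    (fun H j => subsingleton_mul_mem_of_inf_eq_bot H.2.inf_eq_bot (b j)) hbound
  exact ⟨w, fun H hH => hw ⟨H, hH⟩⟩

theorem exists_forall_card_filter_mem_lt_of_quotient [Finite G] [N.Normal]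
    (hN : Minimal (fun M : Subgroup G => M.Normal ∧ M ≠ ⊥) N) (hcomm : ⁅N, N⁆ = ⊥)
    {S : Finset G} (hS : closure (S : Set G) = ⊤) {m t : ℕ} (htm : t ≤ m)
    (hnum : m.choose t * 2 ^ #S < 2 ^ t) (a : Fin m → G ⧸ N)
    (ha : ∀ H : Subgroup (G ⧸ N), H ≠ ⊤ → #{j | a j ∈ H} < t) :
    ∃ b : Fin m → G, ∀ H : Subgroup G, H ≠ ⊤ → #{j | b j ∈ H} < t := by
  obtain ⟨w, hw⟩ :=
    exists_forall_isCompl_card_filter_mul_mem_lt hN.prop.2 hS htm hnum fun j => (a j).out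
  refine ⟨fun j => (a j).out * w j, fun H hH => ?_⟩
  by_cases h : H ⊔ N = ⊤
  · exact hw H (isCompl_of_sup_eq_top hN hcomm hH h)
  · refine (card_le_card fun j hj => ?_).trans_lt (ha _ (map_mk'_ne_top h))
    simp only [mem_filter, mem_univ, true_and] at hj ⊢
    simpa using mem_map_of_mem (QuotientGroup.mk' N) hj

end Subgroup

open Subgroup in
theorem exists_forall_card_filter_mem_lt {k m t : ℕ} (htm : t ≤ m)
    (hnum : m.choose t * 2 ^ k < 2 ^ t) (G : Type*) [Group G] [Finite G] [Group.IsSolvable G]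
    (hgen : ∃ S : Finset G, #S ≤ k ∧ closure (S : Set G) = ⊤) :
    ∃ a : Fin m → G, ∀ H : Subgroup G, H ≠ ⊤ → #{j | a j ∈ H} < t := by
  induction hn : Nat.card G using Nat.strong_induction_on generalizing G with
  | _ n ih =>
  obtain ⟨S, hSk, hS⟩ := hgen
  rcases subsingleton_or_nontrivial G with hG | hG
  · exact ⟨1, fun H hH => (hH (Subsingleton.elim _ _)).elim⟩
  obtain ⟨N, hN⟩ := exists_minimal_of_wellFoundedLT (fun M : Subgroup G => M.Normal ∧ M ≠ ⊥)
    ⟨⊤, inferInstance, top_ne_bot⟩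
  have := hN.prop.1
  have hcard : Nat.card (G ⧸ N) < n := by
    rw [← hn, N.card_eq_card_quotient_mul_card_subgroup]
    exact lt_mul_of_one_lt_right Nat.card_pos (N.one_lt_card_iff_ne_bot.2 hN.prop.2)
  have hgenQ : closure (S.image (QuotientGroup.mk' N) : Set (G ⧸ N)) = ⊤ := by
    rw [coe_image, ← MonoidHom.map_closure, hS,
      map_top_of_surjective _ (QuotientGroup.mk'_surjective N)]
  obtain ⟨a, ha⟩ := ih _ hcard (G ⧸ N) ⟨_, card_image_le.trans hSk, hgenQ⟩ rfl
  exact exists_forall_card_filter_mem_lt_of_quotient hN (commutator_eq_bot_of_minimal hN) hS htm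
    ((Nat.mul_le_mul_left _ (Nat.pow_le_pow_right two_pos hSk)).trans_lt hnum) a ha

theorem stmt18 (k : ℕ) (hk : 0 < k) (G : Type*) [Group G] [Finite G] [Group.IsSolvable G]
    (hgen : ∃ S : Finset G, S.card ≤ k ∧ Subgroup.closure (S : Set G) = ⊤) :
    ∃ A : Multiset G, A ≠ 0 ∧ Multiset.card A ≤ 85 * k ∧ Detects A (1 / 10) := by
  obtain ⟨a, ha⟩ :=
    exists_forall_card_filter_mem_lt (by omega) (choose_mul_two_pow_lt hk) G hgen
  refine ⟨univ.val.map a, by simpa using hk.ne', by simp, fun H hH => ?_⟩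
  have h10 : 10 * #{j | a j ∈ H} ≤ 9 * (85 * k) := by have := ha H hH; omega
  rw [Multiset.filter_map, Multiset.card_map, ← filter_val, card_val, Multiset.card_map,
    card_val, card_univ, Fintype.card_fin]
  simp only [Function.comp_def]
  have : (10 * #{j | a j ∈ H} : ℝ) ≤ 9 * (85 * k) := by exact_mod_cast h10
  push_cast
  linarith
end

section
/- Let k be a positive integer, δ > 0 a real number, and let A be a finite nonempty multiset of elements of the free group F_k on k generators such that A has detection probability at least δ in F_k. Then the sum over the elements w of A (counted with multiplicity) of the reduced word length of w is at least δ·k·|A|; equivalently, the average reduced word length of an element of A is at least δ·k. -/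
open scoped Classical

/-!
For each generator `i`, the kernel of the exponent sum in `i` is a proper subgroup of `F_k`, so
at least `δ |A|` elements of `A` have nonzero exponent sum in `i`; in particular the letter `i`
occurs in their reduced words. Summing over the `k` generators, at least `δ k |A|` pairs
(element of `A`, letter occurring in it) exist, while an element `w` takes part in at most
`|w|` such pairs.
-/

open Finset

namespace FreeGroup

variable {α : Type*} [DecidableEq α]

lemma lift_eq_one_of_forall_mem_toWord {G : Type*} [Group G] {f : α → G} {w : FreeGroup α}
    (h : ∀ x ∈ w.toWord, f x.1 = 1) : lift f w = 1 := by
  rw [← mk_toWord (x := w), lift_mk]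
  refine List.prod_eq_one fun y hy => ?_
  obtain ⟨x, hx, rfl⟩ := List.mem_map.mp hy
  cases x.2 <;> simp [h x hx]

noncomputable def exponentSum (i : α) : FreeGroup α →* Multiplicative ℤ :=
  lift (Pi.mulSingle i (Multiplicative.ofAdd 1))

lemma ker_exponentSum_ne_top (i : α) : (exponentSum i).ker ≠ ⊤ := by
  intro h
  have hi : of i ∈ (exponentSum i).ker := h ▸ Subgroup.mem_top _
  simp [exponentSum, MonoidHom.mem_ker] at hi

lemma mem_ker_exponentSum_of_notMem {i : α} {w : FreeGroup α}
    (h : i ∉ w.toWord.map Prod.fst) : w ∈ (exponentSum i).ker := by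
  refine lift_eq_one_of_forall_mem_toWord fun x hx => Pi.mulSingle_eq_of_ne ?_ _
  rintro rfl
  exact h (List.mem_map_of_mem hx)

lemma card_filter_notMem_ker_exponentSum_le [Fintype α] (w : FreeGroup α) :
    #{i | w ∉ (exponentSum i).ker} ≤ w.toWord.length :=
  calc #{i | w ∉ (exponentSum i).ker}
      ≤ (w.toWord.map Prod.fst).toFinset.card := by
        refine card_le_card fun i hi => List.mem_toFinset.mpr ?_
        by_contra hw
        exact (mem_filter.mp hi).2 (mem_ker_exponentSum_of_notMem hw)
    _ ≤ w.toWord.length := (List.toFinset_card_le _).trans_eq (List.length_map _)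

end FreeGroup

lemma Multiset.sum_countP_eq_sum_map_card_filter {α ι : Type*} [Fintype ι] (p : ι → α → Prop)
    [∀ i, DecidablePred (p i)] (A : Multiset α) :
    ∑ i, A.countP (p i) = (A.map fun a => #{i | p i a}).sum := by
  induction A using Multiset.induction with
  | empty => simp
  | cons a A ih =>
    simp only [Multiset.countP_cons, Finset.sum_add_distrib, ih, Multiset.map_cons,
      Multiset.sum_cons, Finset.card_filter]
    exact add_comm _ _

lemma Detects.mul_card_le_countP_notMem {G : Type*} [Group G] {A : Multiset G} {δ : ℝ}
    (hA : Detects A δ) {H : Subgroup G} [DecidablePred (· ∈ H)] (hH : H ≠ ⊤) :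
    δ * Multiset.card A ≤ A.countP (· ∉ H) := by
  have hmem : (A.countP (· ∈ H) : ℝ) ≤ (1 - δ) * Multiset.card A := by
    convert hA H hH using 3
    rw [Multiset.countP_eq_card_filter]
    congr
  have hsplit : (Multiset.card A : ℝ) = A.countP (· ∈ H) + A.countP (· ∉ H) := by
    exact_mod_cast Multiset.card_eq_countP_add_countP (· ∈ H) A
  linarith

theorem stmt19_general (k : ℕ) (δ : ℝ)
    (A : Multiset (FreeGroup (Fin k))) (hdet : Detects A δ) :
    δ * k * (Multiset.card A : ℝ) ≤
      (((A.map (fun w => (FreeGroup.toWord w).length)).sum : ℕ) : ℝ) := by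
  open FreeGroup in
  calc δ * k * (Multiset.card A : ℝ)
      = ∑ _i : Fin k, δ * Multiset.card A := by
        simp only [sum_const, card_univ, Fintype.card_fin, nsmul_eq_mul]; ring
    _ ≤ ∑ i : Fin k, (A.countP (· ∉ (exponentSum i).ker) : ℝ) :=
        sum_le_sum fun i _ => hdet.mul_card_le_countP_notMem (ker_exponentSum_ne_top i)
    _ = ((A.map fun w => #{i | w ∉ (exponentSum i).ker}).sum : ℕ) := by
        rw [← Multiset.sum_countP_eq_sum_map_card_filter]; push_cast; rfl
    _ ≤ _ := by
        exact_mod_cast Multiset.sum_map_le_sum_map _ _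
          fun w _ => card_filter_notMem_ker_exponentSum_le w

theorem stmt19 (k : ℕ) (hk : 0 < k) (δ : ℝ) (hδ : 0 < δ)
    (A : Multiset (FreeGroup (Fin k))) (hA : A ≠ 0) (hdet : Detects A δ) :
    δ * k * (Multiset.card A : ℝ) ≤
      (((A.map (fun w => (FreeGroup.toWord w).length)).sum : ℕ) : ℝ) :=
  stmt19_general k δ A hdet
end
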